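/- arXiv:0807.3240 — 2 statements merged into one kernel-verified Lean document; each statement's English description precedes it below -/
import Mathlib

section
/- Let X be a connected finite CW complex and let ω be a continuous closed 1-form on X whose cohomology class is nonzero, i.e., ∫_γ ω ≠ 0 for some loop γ in X. Then Cat(X, ω) ≤ cat(X) − 1. -/
open Set

/-- A continuous closed 1-form on a topological space `X`: a collection of
continuous real-valued functions `f i : U i → ℝ` indexed by an open cover
`{U i}` of `X`, such that on overlaps the differences `f i − f j` are locally
constant.  (The functions are recorded as total functions `X → ℝ`; only their
restrictions to `U i` matter.) -/
structure ClosedOneForm (X : Type) [TopologicalSpace X] : Type 1 where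
  ι : Type
  U : ι → Set X
  isOpen : ∀ i, IsOpen (U i)
  covers : ∀ x : X, ∃ i, x ∈ U i
  f : ι → X → ℝ
  cont : ∀ i, ContinuousOn (f i) (U i)
  locConst : ∀ i j, ∀ x ∈ U i ∩ U j, ∃ W, IsOpen W ∧ x ∈ W ∧
    ∀ y ∈ W ∩ (U i ∩ U j), f i y - f j y = f i x - f j x

namespace ClosedOneForm

variable {X Y : Type} [TopologicalSpace X] [TopologicalSpace Y]

/-- `r` is a value of the line integral `∫_γ ω` of the closed 1-form `ω` over
the path `γ : [a,b] → X`: there is a partition `a = t₀ ≤ ⋯ ≤ t_n = b` with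
`γ([t_m, t_{m+1}]) ⊆ U (idx m)` and
`r = Σ_m (f (idx m) (γ t_{m+1}) − f (idx m) (γ t_m))`. -/
def IsPathIntegral (ω : ClosedOneForm X) (γ : ℝ → X) (a b r : ℝ) : Prop :=
  ∃ (n : ℕ) (t : ℕ → ℝ) (idx : ℕ → ω.ι),
    t 0 = a ∧ t n = b ∧ (∀ m < n, t m ≤ t (m + 1)) ∧
    (∀ m < n, ∀ s ∈ Set.Icc (t m) (t (m + 1)), γ s ∈ ω.U (idx m)) ∧
    r = ∑ m ∈ Finset.range n, (ω.f (idx m) (γ (t (m + 1))) - ω.f (idx m) (γ (t m)))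

open scoped Classical in
/-- The line integral `∫_γ ω` over `γ : [a,b] → X` (its value is independent
of all choices; it is defined, via choice, as the common value computed from
any admissible partition). -/
noncomputable def pathIntegral (ω : ClosedOneForm X) (γ : ℝ → X) (a b : ℝ) : ℝ :=
  if h : ∃ r, ω.IsPathIntegral γ a b r then h.choose else 0

/-- A subset `A ⊆ X` is `N`-movable with respect to `ω` if there is a homotopy
`H : A × [0,1] → X` with `H(a,0) = a` and `∫_{t ↦ H(a,t)} ω ≤ −N` for all `a ∈ A`. -/
def NMovable (ω : ClosedOneForm X) (A : Set X) (N : ℝ) : Prop :=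
  ∃ H : X × ℝ → X, ContinuousOn H (A ×ˢ Set.Icc (0 : ℝ) 1) ∧
    (∀ a ∈ A, H (a, 0) = a) ∧
    ∀ a ∈ A, ω.pathIntegral (fun t => H (a, t)) 0 1 ≤ -N

end ClosedOneForm

/-- The inclusion of `V` into `X` is null-homotopic. -/
def NullhomotopicIn (X : Type) [TopologicalSpace X] (V : Set X) : Prop :=
  ∃ (H : X × ℝ → X) (x₀ : X), ContinuousOn H (V ×ˢ Set.Icc (0 : ℝ) 1) ∧
    (∀ v ∈ V, H (v, 0) = v) ∧ (∀ v ∈ V, H (v, 1) = x₀)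

/-- `cat_X(A) ≤ k`: the subset `A` can be covered by `k` open subsets of `X`,
each null-homotopic in `X`. -/
def CatLE (X : Type) [TopologicalSpace X] (A : Set X) (k : ℕ) : Prop :=
  ∃ V : Fin k → Set X, (∀ i, IsOpen (V i)) ∧ A ⊆ ⋃ i, V i ∧
    ∀ i, NullhomotopicIn X (V i)

/-- `cat_X(A)`, the Lusternik–Schnirelmann category of `A` in `X`. -/
noncomputable def catSet (X : Type) [TopologicalSpace X] (A : Set X) : ℕ :=
  sInf {k | CatLE X A k}

/-- `cat(X)`, the Lusternik–Schnirelmann category of `X`. -/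
noncomputable def catSpace (X : Type) [TopologicalSpace X] : ℕ :=
  catSet X Set.univ

namespace ClosedOneForm

/-- `cat(X, ω)`: the minimal `k` such that for every `N > 0` there is a closed
subset `A ⊆ X`, `N`-movable with respect to `ω`, with `cat_X(X − A) ≤ k`. -/
noncomputable def catForm {X : Type} [TopologicalSpace X] (ω : ClosedOneForm X) : ℕ :=
  sInf {k | ∀ N : ℝ, 0 < N →
    ∃ A : Set X, IsClosed A ∧ ω.NMovable A N ∧ CatLE X Aᶜ k}

end ClosedOneForm

namespace ClosedOneForm

variable {X Y : Type} [TopologicalSpace X] [TopologicalSpace Y]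

/-- The pullback `φ*ω` of a closed 1-form along a continuous map `φ : Y → X`,
given by the cover `{φ⁻¹(U)}` and the functions `f_U ∘ φ`. -/
def pullback (ω : ClosedOneForm X) (φ : Y → X) (hφ : Continuous φ) :
    ClosedOneForm Y where
  ι := ω.ι
  U i := φ ⁻¹' ω.U i
  isOpen i := (ω.isOpen i).preimage hφ
  covers y := ω.covers (φ y)
  f i := ω.f i ∘ φ
  cont i := (ω.cont i).comp hφ.continuousOn (fun _ h => h)
  locConst := by
    intro i j y hy
    obtain ⟨W, hWo, hxW, hW⟩ := ω.locConst i j (φ y) hy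
    exact ⟨φ ⁻¹' W, hWo.preimage hφ, hxW, fun z hz => hW (φ z) hz⟩

/-- The sum `ω₁ + ω₂` of two closed 1-forms on `X`, given on the common
refinement of the two covers by the sums of the local functions. -/
def add (ω₁ ω₂ : ClosedOneForm X) : ClosedOneForm X where
  ι := ω₁.ι × ω₂.ι
  U p := ω₁.U p.1 ∩ ω₂.U p.2
  isOpen p := (ω₁.isOpen p.1).inter (ω₂.isOpen p.2)
  covers x := by
    obtain ⟨i, hi⟩ := ω₁.covers x
    obtain ⟨j, hj⟩ := ω₂.covers x
    exact ⟨(i, j), hi, hj⟩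
  f p x := ω₁.f p.1 x + ω₂.f p.2 x
  cont p := ((ω₁.cont p.1).mono Set.inter_subset_left).add
    ((ω₂.cont p.2).mono Set.inter_subset_right)
  locConst := by
    intro p q x hx
    obtain ⟨W₁, h1o, h1x, h1⟩ := ω₁.locConst p.1 q.1 x ⟨hx.1.1, hx.2.1⟩
    obtain ⟨W₂, h2o, h2x, h2⟩ := ω₂.locConst p.2 q.2 x ⟨hx.1.2, hx.2.2⟩
    refine ⟨W₁ ∩ W₂, h1o.inter h2o, ⟨h1x, h2x⟩, fun y hy => ?_⟩
    have e1 := h1 y ⟨hy.1.1, hy.2.1.1, hy.2.2.1⟩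
    have e2 := h2 y ⟨hy.1.2, hy.2.1.2, hy.2.2.2⟩
    try dsimp only at e1 e2 ⊢
    linarith

/-- The closed 1-form `ω + dg` obtained from `ω` by adding the differential of
a continuous function `g : X → ℝ`, i.e. adding `g|_U` to each local function. -/
def addFun (ω : ClosedOneForm X) (g : X → ℝ) (hg : Continuous g) :
    ClosedOneForm X where
  ι := ω.ι
  U := ω.U
  isOpen := ω.isOpen
  covers := ω.covers
  f i x := ω.f i x + g x
  cont i := (ω.cont i).add hg.continuousOn
  locConst := by
    intro i j x hx
    obtain ⟨W, hWo, hWx, hW⟩ := ω.locConst i j x hx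
    refine ⟨W, hWo, hWx, fun y hy => ?_⟩
    have := hW y hy
    try dsimp only at this ⊢
    linarith

end ClosedOneForm

/-- A finite CW structure on a (compact Hausdorff) topological space `X`:
finitely many cells, each given by a characteristic map from the closed unit
ball of a Euclidean space, continuous on the closed ball, injective on the
open ball, whose restriction to the boundary sphere lands in cells of strictly
lower dimension, and such that the images of the open balls partition `X`. -/
structure FinCW (X : Type) [TopologicalSpace X] where
  /-- number of cells -/
  n : ℕ
  /-- dimension of each cell -/
  dim : Fin n → ℕ
  /-- characteristic map of each cell -/
  φ : (i : Fin n) → EuclideanSpace ℝ (Fin (dim i)) → X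
  cont : ∀ i, ContinuousOn (φ i) (Metric.closedBall 0 1)
  injOn : ∀ i, Set.InjOn (φ i) (Metric.ball 0 1)
  sphere_lt : ∀ i, ∀ x ∈ Metric.sphere (0 : EuclideanSpace ℝ (Fin (dim i))) 1,
    ∃ j, dim j < dim i ∧ φ i x ∈ φ j '' Metric.ball 0 1
  partition : ∀ x : X, ∃! p : (i : Fin n) × EuclideanSpace ℝ (Fin (dim i)),
    p.2 ∈ Metric.ball 0 1 ∧ φ p.1 p.2 = x

/-- The Euler characteristic `χ(X) = Σ_i (−1)^i c_i` of a finite CW structure,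
where `c_i` is the number of cells of dimension `i`. -/
def FinCW.euler {X : Type} [TopologicalSpace X] (c : FinCW X) : ℤ :=
  ∑ i : Fin c.n, (-1 : ℤ) ^ (c.dim i)

namespace ClosedOneForm

/-- `Cat(X, ω) ≤ k`: there is an open `U ⊆ X` with `cat_X(X − U) ≤ k` and a
homotopy `h : U × [0,∞) → X` starting from the inclusion such that
`∫_{τ ∈ [0,t] ↦ h(x,τ)} ω → −∞` as `t → ∞`, uniformly in `x ∈ U`. -/
def BigCatLE {X : Type} [TopologicalSpace X] (ω : ClosedOneForm X) (k : ℕ) : Prop :=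
  ∃ U : Set X, IsOpen U ∧ CatLE X Uᶜ k ∧
    ∃ h : X × ℝ → X, ContinuousOn h (U ×ˢ Set.Ici (0 : ℝ)) ∧
      (∀ x ∈ U, h (x, 0) = x) ∧
      ∀ C : ℝ, ∃ T : ℝ, ∀ x ∈ U, ∀ t : ℝ, T ≤ t →
        ω.pathIntegral (fun τ => h (x, τ)) 0 t ≤ -C

/-- `Cat(X, ω)`, the minimal `k` as in `BigCatLE`. -/
noncomputable def bigCatForm {X : Type} [TopologicalSpace X] (ω : ClosedOneForm X) : ℕ :=
  sInf {k | ω.BigCatLE k}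

end ClosedOneForm

/-!
Take a categorical cover `V₀, …, V_k` of `X` with `k + 1 = cat X`, shrink it to open sets `W_j`
with `closure W_j ⊆ V_j`, and choose `V₀` to contain the base point `y` of a loop whose period
is nonzero; reversing the loop if necessary, the period is negative. The complement of
`U = W₀` is covered by `V₁, …, V_k`. A point of `U` is first contracted inside `X` to `y` and
then runs around the loop forever, so the integral of `ω` along its trajectory decreases
linearly in time; this is uniform on `U`, because the integral along the contraction depends
continuously on the point and `closure U` is compact.

`cat X` is finite because a finite CW complex is locally contractible: removing the cells one
at a time in order of decreasing dimension, by pushing each one radially onto its boundary,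
every subcomplex spanned by the cells of dimension at most `d` has an open neighbourhood
retracting onto it by a map homotopic to the identity, and a point of a `d`-cell has a
neighbourhood that retracts into a small ball of that cell.
-/

open Topology

section Topology

variable {α β γ : Type*} [TopologicalSpace α] [TopologicalSpace β] [TopologicalSpace γ]

theorem ContinuousOn.if_le_const {u : α → ℝ} (hu : Continuous u) {c : ℝ} {s : Set α}
    {f g : α → β} (hf : ContinuousOn f (s ∩ {a | u a ≤ c}))
    (hg : ContinuousOn g (s ∩ {a | c ≤ u a})) (hfg : ∀ a ∈ s, u a = c → f a = g a) :
    ContinuousOn (fun a => if u a ≤ c then f a else g a) s := by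
  refine ContinuousOn.if (fun a ha => hfg a ha.1 ?_) ?_ ?_
  · exact frontier_le_subset_eq hu continuous_const ha.2
  · rwa [(isClosed_le hu continuous_const).closure_eq]
  · refine hg.mono (inter_subset_inter_right s ?_)
    simpa only [not_le] using closure_lt_subset_le continuous_const hu

/-- A map continuous on a compact set is closed onto its image. -/
theorem IsCompact.continuousOn_image_of_comp [T2Space β] {q : α → β} {f : β → γ} {K : Set α}
    (hK : IsCompact K) (hq : ContinuousOn q K) (hfq : ContinuousOn (f ∘ q) K) :
    ContinuousOn f (q '' K) := by
  rw [continuousOn_iff_isClosed]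
  intro t ht
  obtain ⟨u, hu, he⟩ := continuousOn_iff_isClosed.mp hfq t ht
  refine ⟨q '' (K ∩ u),
    ((hK.inter_right hu).image_of_continuousOn (hq.mono inter_subset_left)).isClosed, ?_⟩
  ext y
  constructor
  · rintro ⟨hyt, x, hxK, rfl⟩
    have hx : x ∈ (f ∘ q) ⁻¹' t ∩ K := ⟨hyt, hxK⟩
    rw [he] at hx
    exact ⟨⟨x, ⟨hxK, hx.1⟩, rfl⟩, ⟨x, hxK, rfl⟩⟩
  · rintro ⟨⟨x, ⟨hxK, hxu⟩, rfl⟩, -⟩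
    have hx : x ∈ u ∩ K := ⟨hxu, hxK⟩
    rw [← he] at hx
    exact ⟨hx.1, x, hxK, rfl⟩

theorem ContinuousOn.eventually_forall_mem {H : α × β → γ} {V : Set α} {S K : Set β}
    (hH : ContinuousOn H (V ×ˢ S)) (hK : IsCompact K) (hKS : K ⊆ S) {U : Set γ} (hU : IsOpen U)
    {y₀ : α} (hy₀ : y₀ ∈ V) (h : ∀ z ∈ K, H (y₀, z) ∈ U) :
    ∀ᶠ y in 𝓝[V] y₀, ∀ z ∈ K, H (y, z) ∈ U := by
  have hP : ∀ z ∈ K, ∀ᶠ p : α × β in 𝓝 (y₀, z), p ∈ V ×ˢ S → H p ∈ U := fun z hz =>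
    eventually_nhdsWithin_iff.mp (hH _ ⟨hy₀, hKS hz⟩ (hU.mem_nhds (h z hz)))
  filter_upwards [nhdsWithin_le_nhds (hK.eventually_forall_of_forall_eventually
    (P := fun y z => (y, z) ∈ V ×ˢ S → H (y, z) ∈ U) hP), self_mem_nhdsWithin] with y hy hyV
  exact fun z hz => hy z hz ⟨hyV, hKS hz⟩

end Topology

section Homotopy

variable {X : Type} [TopologicalSpace X]

def HomotopicOn (A : Set X) (g g' : X → X) : Prop :=
  ∃ H : X × ℝ → X, ContinuousOn H (A ×ˢ Icc (0 : ℝ) 1) ∧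
    (∀ a ∈ A, H (a, 0) = g a) ∧ (∀ a ∈ A, H (a, 1) = g' a)

namespace HomotopicOn

variable {A B : Set X} {g g' g'' : X → X}

theorem mono (h : HomotopicOn A g g') (hBA : B ⊆ A) : HomotopicOn B g g' := by
  obtain ⟨H, hc, h0, h1⟩ := h
  exact ⟨H, hc.mono (prod_mono hBA Subset.rfl), fun a ha => h0 a (hBA ha),
    fun a ha => h1 a (hBA ha)⟩

theorem comp {P : X → X} (h : HomotopicOn B g g') (hP : ContinuousOn P A)
    (hPAB : MapsTo P A B) : HomotopicOn A (g ∘ P) (g' ∘ P) := by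
  obtain ⟨H, hc, h0, h1⟩ := h
  refine ⟨fun p => H (P p.1, p.2), ?_, fun a ha => h0 _ (hPAB ha), fun a ha => h1 _ (hPAB ha)⟩
  exact hc.comp ((hP.comp continuousOn_fst fun p hp => hp.1).prodMk continuousOn_snd)
    fun p hp => ⟨hPAB hp.1, hp.2⟩

theorem continuousOn_right (h : HomotopicOn A g g') : ContinuousOn g' A := by
  obtain ⟨H, hc, -, h1⟩ := h
  exact (hc.comp (continuousOn_id.prodMk continuousOn_const) fun a ha =>
    ⟨ha, right_mem_Icc.mpr zero_le_one⟩).congr fun a ha => (h1 a ha).symm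

theorem trans (h : HomotopicOn A g g') (h' : HomotopicOn A g' g'') : HomotopicOn A g g'' := by
  obtain ⟨H, hc, h0, h1⟩ := h
  obtain ⟨H', hc', h0', h1'⟩ := h'
  refine ⟨fun p => if p.2 ≤ 1 / 2 then H (p.1, 2 * p.2) else H' (p.1, 2 * p.2 - 1),
    ContinuousOn.if_le_const continuous_snd ?_ ?_ ?_, fun a ha => ?_, fun a ha => ?_⟩
  · refine hc.comp (by fun_prop) ?_
    rintro ⟨a, t⟩ ⟨⟨ha, ht0, -⟩, ht : t ≤ 1 / 2⟩
    exact ⟨ha, by linarith, by linarith⟩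
  · refine hc'.comp (by fun_prop) ?_
    rintro ⟨a, t⟩ ⟨⟨ha, -, ht1⟩, ht : 1 / 2 ≤ t⟩
    exact ⟨ha, by linarith, by linarith⟩
  · rintro ⟨a, t⟩ ⟨ha, -⟩ (rfl : t = 1 / 2)
    norm_num [h1 a ha, h0' a ha]
  · norm_num [h0 a ha]
  · norm_num [h1' a ha]

end HomotopicOn

theorem NullhomotopicIn.of_homotopicOn {V : Set X} {x₀ : X}
    (h : HomotopicOn V id fun _ => x₀) : NullhomotopicIn X V :=
  let ⟨H, hc, h0, h1⟩ := h
  ⟨H, x₀, hc, h0, h1⟩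

/-- After contracting to `x₀`, run the contraction of `y` backwards. -/
theorem NullhomotopicIn.homotopicOn_const {V : Set X} (h : NullhomotopicIn X V) {y : X}
    (hy : y ∈ V) : HomotopicOn V id fun _ => y := by
  obtain ⟨H, x₀, hc, h0, h1⟩ := h
  refine HomotopicOn.trans ⟨H, hc, h0, h1⟩ ⟨fun p => H (y, 1 - p.2), ?_, ?_, ?_⟩
  · refine hc.comp (by fun_prop) ?_
    rintro ⟨a, t⟩ ⟨-, ht0, ht1⟩
    exact ⟨hy, by linarith, by linarith⟩
  · intro a _
    simp [h1 y hy]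
  · intro a _
    simp [h0 y hy]

/-- The inverse of `φ` on the ball, composed with the radial contraction of the ball. -/
theorem homotopicOn_image_closedBall {E : Type*} [NormedAddCommGroup E] [NormedSpace ℝ E]
    [ProperSpace E] [T2Space X] {φ : E → X} {ρ : ℝ}
    (hφ : ContinuousOn φ (Metric.closedBall 0 ρ)) (hinj : InjOn φ (Metric.closedBall 0 ρ)) :
    HomotopicOn (φ '' Metric.closedBall 0 ρ) id fun _ => φ 0 := by
  set ψ := Function.invFunOn φ (Metric.closedBall 0 ρ)
  have hψ : ContinuousOn ψ (φ '' Metric.closedBall 0 ρ) :=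
    (isCompact_closedBall 0 ρ).continuousOn_image_of_comp hφ
      (continuousOn_id.congr fun z hz => hinj.leftInvOn_invFunOn hz)
  have hψmem : ∀ y ∈ φ '' Metric.closedBall 0 ρ, ψ y ∈ Metric.closedBall 0 ρ := fun y hy =>
    Function.invFunOn_mem (by simpa only [mem_image] using hy)
  refine ⟨fun p => φ ((1 - p.2) • ψ p.1), hφ.comp ((continuousOn_const.sub continuousOn_snd).smul
    (hψ.comp continuousOn_fst fun p hp => hp.1)) fun p hp => ?_, fun y hy => ?_, fun y _ => ?_⟩
  · have := hψmem _ hp.1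
    rw [mem_closedBall_zero_iff] at this ⊢
    rw [norm_smul, Real.norm_eq_abs, abs_of_nonneg (by linarith [hp.2.2])]
    nlinarith [hp.2.1, hp.2.2, norm_nonneg (ψ p.1)]
  · simpa using Function.invFunOn_eq (by simpa only [mem_image] using hy)
  · simp

end Homotopy

section Category

variable {X : Type} [TopologicalSpace X]

theorem exists_catLE_univ_of_forall_nullhomotopicIn [CompactSpace X]
    (h : ∀ x : X, ∃ O, IsOpen O ∧ x ∈ O ∧ NullhomotopicIn X O) : ∃ k, CatLE X univ k := by
  choose O hOo hxO hO using h
  obtain ⟨s, hs⟩ := isCompact_univ.elim_finite_subcover O hOo fun x _ => mem_iUnion.mpr ⟨x, hxO x⟩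
  refine ⟨s.card, fun i => O (s.equivFin.symm i), fun i => hOo _, fun x hx => ?_, fun i => hO _⟩
  obtain ⟨y, hy, hxy⟩ := mem_iUnion₂.mp (hs hx)
  exact mem_iUnion.mpr ⟨s.equivFin ⟨y, hy⟩, by simpa using hxy⟩

theorem CatLE.pos [Nonempty X] {k : ℕ} (h : CatLE X univ k) : 0 < k :=
  let ⟨_, _, hcov, _⟩ := h
  (mem_iUnion.mp (hcov (mem_univ (Classical.arbitrary X)))).choose.pos

theorem CatLE.exists_shrink [NormalSpace X] {k : ℕ}
    (h : CatLE X univ (k + 1)) (y : X) :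
    ∃ U V : Set X, IsOpen U ∧ closure U ⊆ V ∧ y ∈ V ∧ NullhomotopicIn X V ∧ CatLE X Uᶜ k := by
  obtain ⟨V, hVo, hcov, hnull⟩ := h
  obtain ⟨i₀, hi₀⟩ := mem_iUnion.mp (hcov (mem_univ y))
  obtain ⟨W, hWcov, hWo, hWV⟩ :=
    exists_subset_iUnion_closure_subset isClosed_univ hVo (fun _ _ => toFinite _) hcov
  refine ⟨W i₀, V i₀, hWo i₀, hWV i₀, hi₀, hnull i₀, fun j => V (i₀.succAbove j),
    fun j => hVo _, fun x hx => ?_, fun j => hnull _⟩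
  obtain ⟨i, hi⟩ := mem_iUnion.mp (hWcov (mem_univ x))
  obtain ⟨j, rfl⟩ := Fin.exists_succAbove_eq (x := i) (y := i₀) (by rintro rfl; exact hx hi)
  exact mem_iUnion.mpr ⟨j, hWV _ (subset_closure hi)⟩

end Category

namespace ClosedOneForm

variable {X : Type} [TopologicalSpace X] {ω : ClosedOneForm X}

theorem sub_eq_of_isPreconnected {i j : ω.ι} {S : Set X} (hS : IsPreconnected S)
    (hSU : S ⊆ ω.U i ∩ ω.U j) {x y : X} (hx : x ∈ S) (hy : y ∈ S) :
    ω.f i x - ω.f j x = ω.f i y - ω.f j y := by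
  set O := ω.U i ∩ ω.U j
  have hloc : IsLocallyConstant fun p : O => ω.f i p - ω.f j p := by
    refine (IsLocallyConstant.iff_eventually_eq _).mpr fun p => ?_
    obtain ⟨W, hWo, hpW, hW⟩ := ω.locConst i j p p.2
    filter_upwards [continuous_subtype_val.continuousAt.preimage_mem_nhds (hWo.mem_nhds hpW)]
      with q hq using hW q ⟨hq, q.2⟩
  have hS' : IsPreconnected (((↑) : O → X) ⁻¹' S) := by
    rwa [← Topology.IsInducing.subtypeVal.isPreconnected_image, Subtype.image_preimage_coe,
      inter_eq_right.mpr hSU]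
  exact hloc.apply_eq_of_isPreconnected (x := ⟨x, hSU hx⟩) (y := ⟨y, hSU hy⟩) hS' hx hy

variable (ω) in
def IsPartitionSum (γ : ℝ → X) (a b r : ℝ) (n : ℕ) (t : ℕ → ℝ) (idx : ℕ → ω.ι) : Prop :=
  t 0 = a ∧ t n = b ∧ (∀ m < n, t m ≤ t (m + 1)) ∧
    (∀ m < n, ∀ s ∈ Icc (t m) (t (m + 1)), γ s ∈ ω.U (idx m)) ∧
    r = ∑ m ∈ Finset.range n, (ω.f (idx m) (γ (t (m + 1))) - ω.f (idx m) (γ (t m)))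

variable {γ γ' : ℝ → X} {a b c r r' : ℝ}

theorem isPathIntegral_iff :
    ω.IsPathIntegral γ a b r ↔ ∃ n t idx, ω.IsPartitionSum γ a b r n t idx := Iff.rfl

namespace IsPartitionSum

variable {n : ℕ} {t : ℕ → ℝ} {idx : ℕ → ω.ι}

theorem mem_Icc (h : ω.IsPartitionSum γ a b r n t idx) {m : ℕ} (hm : m ≤ n) :
    t m ∈ Icc a b := by
  obtain ⟨h0, hn, hmono, -⟩ := h
  have hmon : MonotoneOn t (Iic n) := monotoneOn_of_le_succ ordConnected_Iic
    fun k _ _ hk => hmono k (by rw [mem_Iic, Order.succ_eq_add_one] at hk; omega)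
  exact ⟨h0 ▸ hmon (mem_Iic.mpr (Nat.zero_le n)) (mem_Iic.mpr hm) (Nat.zero_le m),
    hn ▸ hmon (mem_Iic.mpr hm) (mem_Iic.mpr le_rfl) hm⟩

theorem Icc_subset (h : ω.IsPartitionSum γ a b r n t idx) {m : ℕ} (hm : m < n) :
    Icc (t m) (t (m + 1)) ⊆ Icc a b :=
  Icc_subset_Icc (h.mem_Icc hm.le).1 (h.mem_Icc hm).2

theorem eq_zero_of_self (h : ω.IsPartitionSum γ a a r n t idx) : r = 0 := by
  rw [h.2.2.2.2]
  refine Finset.sum_eq_zero fun m hm => ?_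
  have hm := Finset.mem_range.mp hm
  have e₀ := h.mem_Icc hm.le
  have e₁ := h.mem_Icc hm
  rw [le_antisymm e₀.2 e₀.1, le_antisymm e₁.2 e₁.1, sub_self]

theorem tail (h : ω.IsPartitionSum γ a b r (n + 1) t idx) :
    ω.IsPartitionSum γ (t 1) b (r - (ω.f (idx 0) (γ (t 1)) - ω.f (idx 0) (γ a))) n
      (fun m => t (m + 1)) (fun m => idx (m + 1)) := by
  obtain ⟨h0, hn, hmono, hpiece, hsum⟩ := h
  refine ⟨rfl, hn, fun m hm => hmono (m + 1) (by omega), fun m hm => hpiece (m + 1) (by omega),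
    ?_⟩
  rw [hsum, Finset.sum_range_succ', h0]
  ring

/-- The chart of the removed segment may be replaced by any chart `i` containing it, since the
two differ by a constant along it. -/
theorem clip (h : ω.IsPartitionSum γ a b r (n + 1) t idx) (hγ : ContinuousOn γ (Icc a c))
    (hac : a ≤ c) (hct : c ≤ t 1) {i : ω.ι} (hi : ∀ s ∈ Icc a c, γ s ∈ ω.U i) :
    ω.IsPartitionSum γ c b (r - (ω.f i (γ c) - ω.f i (γ a))) (n + 1)
      (Function.update t 0 c) idx := by
  obtain ⟨h0, hn, hmono, hpiece, hsum⟩ := h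
  have hup : ∀ m, Function.update t 0 c (m + 1) = t (m + 1) := fun m =>
    Function.update_of_ne (Nat.succ_ne_zero m) _ _
  have hfirst : ∀ s ∈ Icc a c, γ s ∈ ω.U (idx 0) := fun s hs =>
    hpiece 0 (Nat.succ_pos n) s ⟨h0 ▸ hs.1, hs.2.trans hct⟩
  have hdiff := sub_eq_of_isPreconnected (isPreconnected_Icc.image γ hγ)
    (image_subset_iff.mpr fun s hs => ⟨hi s hs, hfirst s hs⟩)
    (mem_image_of_mem γ (right_mem_Icc.mpr hac)) (mem_image_of_mem γ (left_mem_Icc.mpr hac))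
  refine ⟨Function.update_self _ _ _, by rw [hup, hn], fun m hm => ?_, fun m hm s hs => ?_, ?_⟩
  · rcases m with _ | m
    · simpa [hup] using hct
    · simpa only [hup] using hmono (m + 1) hm
  · rcases m with _ | m
    · simp only [Function.update_self, zero_add, hup] at hs
      exact hpiece 0 hm s ⟨h0 ▸ hac.trans hs.1, hs.2⟩
    · simp only [hup] at hs
      exact hpiece (m + 1) hm s hs
  · simp only [hsum, Finset.sum_range_succ', hup, Function.update_self, h0]
    linarith

end IsPartitionSum

/-- Two partition sums of the same path agree: peel off the first piece of the partition whose
first break point comes first, and move the left endpoint of the other one to that point. -/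
theorem IsPartitionSum.eq {n n' : ℕ} {t s : ℕ → ℝ} {idx jdx : ℕ → ω.ι}
    (hγ : ContinuousOn γ (Icc a b)) (h : ω.IsPartitionSum γ a b r n t idx)
    (h' : ω.IsPartitionSum γ a b r' n' s jdx) : r = r' := by
  obtain ⟨N, hN⟩ : ∃ N, n + n' = N := ⟨_, rfl⟩
  induction N using Nat.strong_induction_on generalizing a n n' t s idx jdx r r' with
  | _ N ih =>
  have key : ∀ {n n' : ℕ} {t s : ℕ → ℝ} {idx jdx : ℕ → ω.ι} {r r' : ℝ},
      n + 1 + (n' + 1) ≤ N → ω.IsPartitionSum γ a b r (n + 1) t idx →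
      ω.IsPartitionSum γ a b r' (n' + 1) s jdx → t 1 ≤ s 1 → r = r' := by
    intro n n' t s idx jdx r r' hN h h' hts
    have ht1 : t 1 ∈ Icc a b := h.mem_Icc (by omega)
    have hclip := h'.clip (hγ.mono (Icc_subset_Icc le_rfl ht1.2)) ht1.1 hts
      fun u hu => h.2.2.2.1 0 n.succ_pos u (h.1 ▸ hu)
    have := ih _ (by omega) (hγ.mono (Icc_subset_Icc ht1.1 le_rfl)) h.tail hclip rfl
    linarith
  rcases n with _ | n
  · have hab : a = b := h.1.symm.trans h.2.1
    subst hab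
    rw [h.eq_zero_of_self, h'.eq_zero_of_self]
  rcases n' with _ | n'
  · have hab : a = b := h'.1.symm.trans h'.2.1
    subst hab
    rw [h.eq_zero_of_self, h'.eq_zero_of_self]
  rcases le_total (t 1) (s 1) with hts | hst
  · exact key hN.le h h' hts
  · exact (key (by omega) h' h hst).symm

namespace IsPathIntegral

theorem eq (hγ : ContinuousOn γ (Icc a b)) (h : ω.IsPathIntegral γ a b r)
    (h' : ω.IsPathIntegral γ a b r') : r = r' :=
  let ⟨_, _, _, h⟩ := h
  let ⟨_, _, _, h'⟩ := h'
  IsPartitionSum.eq hγ h h'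

theorem pathIntegral_eq (hγ : ContinuousOn γ (Icc a b))
    (h : ω.IsPathIntegral γ a b r) : ω.pathIntegral γ a b = r := by
  have hex : ∃ r, ω.IsPathIntegral γ a b r := ⟨r, h⟩
  rw [pathIntegral, dif_pos hex]
  exact hex.choose_spec.eq hγ h

theorem refl (x : X) : ω.IsPathIntegral γ a a 0 :=
  let i := (ω.covers x).choose
  ⟨0, fun _ => a, fun _ => i, rfl, rfl, nofun, nofun, by simp⟩

theorem of_mapsTo {i : ω.ι} (hab : a ≤ b) (hi : ∀ s ∈ Icc a b, γ s ∈ ω.U i) :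
    ω.IsPathIntegral γ a b (ω.f i (γ b) - ω.f i (γ a)) :=
  ⟨1, fun m => if m = 0 then a else b, fun _ => i, rfl, rfl,
    fun m hm => by obtain rfl := Nat.lt_one_iff.mp hm; simpa using hab,
    fun m hm => by obtain rfl := Nat.lt_one_iff.mp hm; simpa using hi, by simp⟩

theorem congr (h : ω.IsPathIntegral γ a b r) (he : EqOn γ γ' (Icc a b)) :
    ω.IsPathIntegral γ' a b r := by
  obtain ⟨n, t, idx, h⟩ := isPathIntegral_iff.mp h
  refine ⟨n, t, idx, h.1, h.2.1, h.2.2.1, fun m hm s hs => ?_, ?_⟩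
  · rw [← he (h.Icc_subset hm hs)]
    exact h.2.2.2.1 m hm s hs
  · rw [h.2.2.2.2]
    refine Finset.sum_congr rfl fun m hm => ?_
    have hm := Finset.mem_range.mp hm
    rw [he (h.mem_Icc hm.le), he (h.mem_Icc hm)]

theorem trans (h : ω.IsPathIntegral γ a b r) (h' : ω.IsPathIntegral γ b c r') :
    ω.IsPathIntegral γ a c (r + r') := by
  obtain ⟨n, t, idx, h0, hn, hmono, hpiece, hsum⟩ := h
  obtain ⟨n', s, jdx, h0', hn', hmono', hpiece', hsum'⟩ := h'
  set t'' : ℕ → ℝ := fun m => if m ≤ n then t m else s (m - n)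
  set idx'' : ℕ → ω.ι := fun m => if m < n then idx m else jdx (m - n)
  have ht : ∀ m ≤ n, t'' m = t m := fun m hm => if_pos hm
  have hs : ∀ k, t'' (n + k) = s k := by
    rintro (_ | k)
    · simp [t'', hn, h0']
    · simp [t'']
  have hidx : ∀ m < n, idx'' m = idx m := fun m hm => if_pos hm
  have hjdx : ∀ k, idx'' (n + k) = jdx k := fun k => by simp [idx'']
  have hcases : ∀ m < n + n', m < n ∨ ∃ k < n', m = n + k := fun m hm => by
    rcases lt_or_ge m n with h | h
    · exact Or.inl h
    · exact Or.inr ⟨m - n, by omega, by omega⟩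
  refine ⟨n + n', t'', idx'', by rw [ht 0 (Nat.zero_le n), h0], by rw [hs, hn'],
    fun m hm => ?_, fun m hm => ?_, ?_⟩
  · rcases hcases m hm with hm | ⟨k, hk, rfl⟩
    · rw [ht m hm.le, ht (m + 1) hm]; exact hmono m hm
    · rw [hs, add_assoc, hs]; exact hmono' k hk
  · rcases hcases m hm with hm | ⟨k, hk, rfl⟩
    · rw [ht m hm.le, ht (m + 1) hm, hidx m hm]; exact hpiece m hm
    · rw [hs, add_assoc, hs, hjdx]; exact hpiece' k hk
  · rw [Finset.sum_range_add, hsum, hsum']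
    congr 1
    · refine Finset.sum_congr rfl fun m hm => ?_
      have hm := Finset.mem_range.mp hm
      rw [ht m hm.le, ht (m + 1) hm, hidx m hm]
    · refine Finset.sum_congr rfl fun k _ => ?_
      rw [hjdx, add_assoc, hs, hs]

theorem comp_sub_const (h : ω.IsPathIntegral γ a b r) (c : ℝ) :
    ω.IsPathIntegral (fun τ => γ (τ - c)) (a + c) (b + c) r := by
  obtain ⟨n, t, idx, h0, hn, hmono, hpiece, hsum⟩ := h
  refine ⟨n, fun m => t m + c, idx, by simp [h0], by simp [hn], fun m hm => ?_,
    fun m hm s hs => hpiece m hm (s - c) ⟨?_, ?_⟩, by simpa using hsum⟩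
  · linarith [hmono m hm]
  · linarith [hs.1]
  · linarith [hs.2]

theorem reverse (h : ω.IsPathIntegral γ a b r) :
    ω.IsPathIntegral (fun τ => γ (a + b - τ)) a b (-r) := by
  obtain ⟨n, t, idx, h0, hn, hmono, hpiece, hsum⟩ := h
  have hrev : ∀ m < n, n - (m + 1) + 1 = n - m := fun m hm => by omega
  refine ⟨n, fun m => a + b - t (n - m), fun m => idx (n - (m + 1)), by simp [hn],
    by simp [h0], fun m hm => ?_, fun m hm s hs => hpiece _ (by omega) _ ⟨?_, ?_⟩, ?_⟩
  · have := hmono _ (show n - (m + 1) < n by omega)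
    rw [hrev m hm] at this
    dsimp only
    linarith
  · linarith [hs.2]
  · rw [hrev m hm]; linarith [hs.1]
  · rw [hsum, ← Finset.sum_range_reflect, ← Finset.sum_neg_distrib]
    refine Finset.sum_congr rfl fun m hm => ?_
    have hm := Finset.mem_range.mp hm
    rw [show n - 1 - m = n - (m + 1) by omega, hrev m hm]
    simp

end IsPathIntegral

theorem exists_isPathIntegral (hab : a ≤ b) (hγ : ContinuousOn γ (Icc a b)) :
    ∃ r, ω.IsPathIntegral γ a b r := by
  have : Nonempty ω.ι := ⟨(ω.covers (γ a)).choose⟩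
  have hcov : ∀ u ∈ Icc a b, ∃ i, γ ⁻¹' ω.U i ∈ 𝓝[Icc a b] u := fun u hu =>
    let ⟨i, hi⟩ := ω.covers (γ u)
    ⟨i, Filter.mem_map.mp (hγ u hu ((ω.isOpen i).mem_nhds hi))⟩
  choose! i hi using hcov
  obtain ⟨δ, hδ, hleb⟩ := Metric.uniformity_basis_dist.lebesgue_number_lemma_nhdsWithin
    isCompact_Icc hi
  obtain ⟨n, hn⟩ := exists_nat_gt ((b - a) / δ)
  have hn0 : (0 : ℝ) < n := lt_of_le_of_lt (div_nonneg (by linarith) hδ.le) hn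
  set step := (b - a) / n
  have hnstep : n * step = b - a := mul_div_cancel₀ _ hn0.ne'
  have hstep : step < δ := by
    rw [div_lt_iff₀ hδ] at hn
    rw [div_lt_iff₀ hn0]
    linarith
  have hstep0 : 0 ≤ step := div_nonneg (by linarith) hn0.le
  have hmem : ∀ m : ℕ, m ≤ n → a + m * step ∈ Icc a b := fun m hm => by
    have hm : (m : ℝ) ≤ n := by exact_mod_cast hm
    constructor <;> nlinarith
  have hind : ∀ m ≤ n, ∃ r, ω.IsPathIntegral γ a (a + m * step) r := by
    intro m
    induction m with
    | zero => exact fun _ => ⟨0, by simpa using IsPathIntegral.refl (γ a)⟩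
    | succ m ih =>
      intro hm
      obtain ⟨r, hr⟩ := ih (by omega)
      obtain ⟨u, hu⟩ := hleb _ (hmem m (by omega))
      have hm1 := hmem (m + 1) hm
      push_cast at hm1 ⊢
      have hpiece : ∀ s ∈ Icc (a + m * step) (a + (m + 1) * step), γ s ∈ ω.U (i u) := by
        intro s hs
        refine hu ⟨?_, (hmem m (by omega)).1.trans hs.1, hs.2.trans hm1.2⟩
        show dist (a + m * step) s < δ
        rw [Real.dist_eq, abs_lt]
        constructor <;> nlinarith [hs.1, hs.2]
      exact ⟨_, hr.trans (IsPathIntegral.of_mapsTo (by nlinarith) hpiece)⟩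
  obtain ⟨r, hr⟩ := hind n le_rfl
  exact ⟨r, by rwa [hnstep, add_sub_cancel] at hr⟩

theorem pathIntegral_sub_pathIntegral (hγ : ContinuousOn γ (Icc a b)) {s s' : ℝ}
    (hs : s ∈ Icc a b) (hs' : s' ∈ Icc a b) {i : ω.ι} (hi : ∀ u ∈ uIcc s s', γ u ∈ ω.U i) :
    ω.pathIntegral γ a s' - ω.pathIntegral γ a s = ω.f i (γ s') - ω.f i (γ s) := by
  wlog hss' : s ≤ s' generalizing s s'
  · have := this hs' hs (uIcc_comm s s' ▸ hi) (le_of_not_ge hss')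
    linarith
  obtain ⟨r, hr⟩ := exists_isPathIntegral hs.1 (hγ.mono (Icc_subset_Icc le_rfl hs.2))
  have hr' := hr.trans (IsPathIntegral.of_mapsTo hss' fun u hu => hi u (Icc_subset_uIcc hu))
  rw [hr'.pathIntegral_eq (hγ.mono (Icc_subset_Icc le_rfl hs'.2)),
    hr.pathIntegral_eq (hγ.mono (Icc_subset_Icc le_rfl hs.2))]
  ring

/-- Near each point the partial integral differs from a local primitive `f i ∘ γ` by a
constant. -/
theorem continuousOn_pathIntegral (hγ : ContinuousOn γ (Icc a b)) :
    ContinuousOn (fun s => ω.pathIntegral γ a s) (Icc a b) := by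
  intro s₀ hs₀
  obtain ⟨i, hi⟩ := ω.covers (γ s₀)
  obtain ⟨ε, hε, hball⟩ := Metric.mem_nhdsWithin_iff.mp
    (Filter.mem_map.mp (hγ s₀ hs₀ ((ω.isOpen i).mem_nhds hi)))
  have hconn : (Metric.ball s₀ ε ∩ Icc a b).OrdConnected := by
    rw [Real.ball_eq_Ioo]
    infer_instance
  have heq : (fun s => ω.pathIntegral γ a s) =ᶠ[𝓝[Icc a b] s₀]
      fun s => ω.pathIntegral γ a s₀ + (ω.f i (γ s) - ω.f i (γ s₀)) := by
    filter_upwards [inter_mem_nhdsWithin _ (Metric.ball_mem_nhds s₀ hε)] with s hs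
    have := pathIntegral_sub_pathIntegral hγ hs₀ hs.1 fun u hu =>
      hball (hconn.uIcc_subset ⟨Metric.mem_ball_self hε, hs₀⟩ ⟨hs.2, hs.1⟩ hu)
    linarith
  refine ContinuousWithinAt.congr_of_eventuallyEq ?_ heq (by simp)
  exact continuousWithinAt_const.add
    ((((ω.cont i).continuousAt ((ω.isOpen i).mem_nhds hi)).comp_continuousWithinAt
      (hγ s₀ hs₀)).sub continuousWithinAt_const)

/-- On a neighbourhood of `y₀` all the paths `H (y, ·)` are subordinate to one partition of
`[0, 1]` adapted to `H (y₀, ·)` (tube lemma), so their integrals are a finite sum of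
continuous functions of `y`. -/
theorem continuousOn_pathIntegral_param {Y : Type*} [TopologicalSpace Y] {V : Set Y}
    {H : Y × ℝ → X} (hH : ContinuousOn H (V ×ˢ Icc 0 1)) :
    ContinuousOn (fun y => ω.pathIntegral (fun τ => H (y, τ)) 0 1) V := by
  have hpath : ∀ y ∈ V, ContinuousOn (fun τ => H (y, τ)) (Icc 0 1) := fun y hy =>
    hH.comp (by fun_prop) fun τ hτ => ⟨hy, hτ⟩
  intro y₀ hy₀
  obtain ⟨r, hr⟩ := exists_isPathIntegral (ω := ω) zero_le_one (hpath y₀ hy₀)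
  obtain ⟨n, t, idx, hP⟩ := isPathIntegral_iff.mp hr
  have hnear : ∀ m < n, ∀ᶠ y in 𝓝[V] y₀, ∀ τ ∈ Icc (t m) (t (m + 1)),
      H (y, τ) ∈ ω.U (idx m) := fun m hm =>
    hH.eventually_forall_mem isCompact_Icc (hP.Icc_subset hm) (ω.isOpen _) hy₀
      (hP.2.2.2.1 m hm)
  have hnear' := (Finset.range n).eventually_all.mpr fun m hm => hnear m (Finset.mem_range.mp hm)
  have heq : (fun y => ω.pathIntegral (fun τ => H (y, τ)) 0 1) =ᶠ[𝓝[V] y₀]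
      fun y => ∑ m ∈ Finset.range n,
        (ω.f (idx m) (H (y, t (m + 1))) - ω.f (idx m) (H (y, t m))) := by
    filter_upwards [hnear', self_mem_nhdsWithin] with y hy hyV
    exact IsPathIntegral.pathIntegral_eq (hpath y hyV) ⟨n, t, idx, hP.1, hP.2.1, hP.2.2.1,
      fun m hm => hy m (Finset.mem_range.mpr hm), rfl⟩
  have hterm : ∀ m < n, ∀ τ ∈ Icc (t m) (t (m + 1)),
      ContinuousWithinAt (fun y => ω.f (idx m) (H (y, τ))) V y₀ := by
    intro m hm τ hτ
    have hHτ : ContinuousWithinAt (fun y => H (y, τ)) V y₀ :=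
      hH.comp (continuousOn_id.prodMk continuousOn_const)
        (fun y hy => ⟨hy, hP.Icc_subset hm hτ⟩) y₀ hy₀
    exact ((ω.cont _).continuousAt ((ω.isOpen _).mem_nhds
      (hP.2.2.2.1 m hm τ hτ))).comp_continuousWithinAt (f := fun y => H (y, τ)) hHτ
  refine ContinuousWithinAt.congr_of_eventuallyEq ?_ heq (heq.eq_of_nhdsWithin hy₀)
  exact tendsto_finsetSum _ fun m hm =>
    have hm := Finset.mem_range.mp hm
    (hterm m hm _ (right_mem_Icc.mpr (hP.2.2.1 m hm))).sub
      (hterm m hm _ (left_mem_Icc.mpr (hP.2.2.1 m hm)))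

theorem exists_loop_isPathIntegral_neg (hγ : ContinuousOn γ (Icc 0 1)) (hloop : γ 0 = γ 1)
    (hne : ω.pathIntegral γ 0 1 ≠ 0) :
    ∃ δ : ℝ → X, ContinuousOn δ (Icc 0 1) ∧ δ 0 = γ 0 ∧ δ 1 = γ 0 ∧
      ∃ p < 0, ω.IsPathIntegral δ 0 1 p := by
  obtain ⟨r, hr⟩ := exists_isPathIntegral (ω := ω) zero_le_one hγ
  rw [hr.pathIntegral_eq hγ] at hne
  rcases hne.lt_or_gt with hneg | hpos
  · exact ⟨γ, hγ, rfl, hloop.symm, r, hneg, hr⟩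
  · refine ⟨fun τ => γ (0 + 1 - τ), hγ.comp (by fun_prop) fun τ hτ => ⟨?_, ?_⟩, ?_, ?_, -r,
      neg_neg_iff_pos.mpr hpos, hr.reverse⟩ <;> simp_all

/-- Running around a loop of negative period forever: its integral decreases linearly, up to
the bounded integral over an incomplete last lap. -/
theorem exists_ray (hγ : ContinuousOn γ (Icc 0 1)) (hloop : γ 0 = γ 1)
    (hne : ω.pathIntegral γ 0 1 ≠ 0) :
    ∃ L : ℝ → X, Continuous L ∧ L 0 = γ 0 ∧
      ∃ B ε : ℝ, 0 < ε ∧ ∀ s, 0 ≤ s → ω.pathIntegral L 0 s ≤ B - ε * s := by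
  obtain ⟨δ, hδ, hδ0, hδ1, p, hp, hδp⟩ := exists_loop_isPathIntegral_neg hγ hloop hne
  set L : ℝ → X := δ ∘ Int.fract
  have hL : Continuous L := hδ.comp_fract'' (hδ0.trans hδ1.symm)
  have hper : ∀ (k : ℕ) τ, L (τ - k) = L τ := fun k τ => by
    simp only [L, Function.comp_apply, ← Int.cast_natCast (R := ℝ), Int.fract_sub_intCast]
  have hlap : ω.IsPathIntegral L 0 1 p := hδp.congr fun τ hτ => by
    rcases hτ.2.lt_or_eq with h | rfl
    · simp [L, Int.fract_eq_self.mpr ⟨hτ.1, h⟩]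
    · simp [L, hδ0, hδ1]
  have hlaps : ∀ k : ℕ, ω.IsPathIntegral L 0 k (k * p) := by
    intro k
    induction k with
    | zero => simpa using IsPathIntegral.refl (L 0)
    | succ k ih =>
      have hk := hlap.comp_sub_const k
      simp only [hper, zero_add] at hk
      convert ih.trans hk using 1 <;> push_cast <;> ring
  obtain ⟨B, hB⟩ := isCompact_Icc.bddAbove_image (continuousOn_pathIntegral (ω := ω)
    (a := 0) (b := 1) hL.continuousOn)
  refine ⟨L, hL, by simp [L, hδ0], B - p, -p, neg_pos.mpr hp, fun s hs => ?_⟩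
  set k := ⌊s⌋₊
  have hks : (k : ℝ) ≤ s := Nat.floor_le hs
  have hsk : s - k ≤ 1 := by linarith [Nat.lt_floor_add_one s]
  obtain ⟨J, hJ⟩ := exists_isPathIntegral (ω := ω) (sub_nonneg.mpr hks) hL.continuousOn
  have hJk := hJ.comp_sub_const k
  simp only [hper, zero_add, sub_add_cancel] at hJk
  rw [((hlaps k).trans hJk).pathIntegral_eq hL.continuousOn]
  have hJB : J ≤ B := hJ.pathIntegral_eq hL.continuousOn ▸
    hB (mem_image_of_mem _ ⟨sub_nonneg.mpr hks, hsk⟩)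
  nlinarith

theorem pathIntegral_concat {α β : ℝ → X} (hα : ContinuousOn α (Icc 0 1)) (hβ : Continuous β)
    (hαβ : α 1 = β 0) {t : ℝ} (ht : 1 ≤ t) :
    ω.pathIntegral (fun τ => if τ ≤ 1 then α τ else β (τ - 1)) 0 t =
      ω.pathIntegral α 0 1 + ω.pathIntegral β 0 (t - 1) := by
  set σ : ℝ → X := fun τ => if τ ≤ 1 then α τ else β (τ - 1)
  have hσ : ContinuousOn σ (Icc 0 t) := by
    refine ContinuousOn.if_le_const continuous_id (hα.mono fun τ hτ => ⟨hτ.1.1, hτ.2⟩)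
      (by fun_prop) ?_
    rintro τ - rfl
    simp [hαβ]
  obtain ⟨r, hr⟩ := exists_isPathIntegral (ω := ω) zero_le_one hα
  obtain ⟨r', hr'⟩ := exists_isPathIntegral (ω := ω) (sub_nonneg.mpr ht) hβ.continuousOn
  have h₁ : ω.IsPathIntegral σ 0 1 r := hr.congr fun τ hτ => (if_pos hτ.2).symm
  have h₂ : ω.IsPathIntegral σ 1 t r' := by
    have := hr'.comp_sub_const 1
    rw [zero_add, sub_add_cancel] at this
    refine this.congr fun τ hτ => ?_
    rcases hτ.1.eq_or_lt with rfl | h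
    · simp [σ, hαβ]
    · simp [σ, not_le.mpr h]
  rw [(h₁.trans h₂).pathIntegral_eq hσ, hr.pathIntegral_eq hα,
    hr'.pathIntegral_eq hβ.continuousOn]

theorem bigCatLE_of_catLE_succ [T2Space X] [CompactSpace X] (ω : ClosedOneForm X) {k : ℕ}
    (hcat : CatLE X univ (k + 1))
    (hξ : ∃ γ : ℝ → X, ContinuousOn γ (Icc 0 1) ∧ γ 0 = γ 1 ∧ ω.pathIntegral γ 0 1 ≠ 0) :
    ω.BigCatLE k := by
  obtain ⟨γ, hγ, hloop, hne⟩ := hξ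
  obtain ⟨L, hL, hL0, B, ε, hε, hLB⟩ := exists_ray hγ hloop hne
  obtain ⟨U, V, hUo, hUV, hyV, hVnull, hUcat⟩ := hcat.exists_shrink (γ 0)
  obtain ⟨H, hH, hH0, hH1⟩ := hVnull.homotopicOn_const hyV
  obtain ⟨M, hM⟩ := isClosed_closure.isCompact.bddAbove_image
    ((continuousOn_pathIntegral_param (ω := ω) hH).mono hUV)
  set h : X × ℝ → X := fun p => if p.2 ≤ 1 then H p else L (p.2 - 1)
  have hh : ContinuousOn h (U ×ˢ Ici 0) := by
    refine ContinuousOn.if_le_const continuous_snd (hH.mono ?_) (by fun_prop) ?_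
    · rintro ⟨x, τ⟩ ⟨⟨hx, hτ⟩, hτ'⟩
      exact ⟨hUV (subset_closure hx), hτ, hτ'⟩
    · rintro ⟨x, τ⟩ ⟨hx, -⟩ (rfl : τ = 1)
      simp [hH1 x (hUV (subset_closure hx)), hL0]
  refine ⟨U, hUo, hUcat, h, hh, fun x hx => by simp [h, hH0 x (hUV (subset_closure hx))],
    fun C => ⟨max 1 (1 + (C + M + B) / ε), fun x hx t ht => ?_⟩⟩
  have ht1 : 1 ≤ t := (le_max_left _ _).trans ht
  have hxV := hUV (subset_closure hx)
  have hconcat := pathIntegral_concat (ω := ω) (α := fun τ => H (x, τ))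
    (hH.comp (by fun_prop) fun τ hτ => ⟨hxV, hτ⟩) hL (by simp [hH1 x hxV, hL0]) ht1
  have hMx : ω.pathIntegral (fun τ => H (x, τ)) 0 1 ≤ M :=
    hM (mem_image_of_mem _ (subset_closure hx))
  have hCt : C + M + B ≤ ε * (t - 1) := by
    have := (le_max_right _ _).trans ht
    rw [← le_sub_iff_add_le', div_le_iff₀ hε] at this
    linarith
  have := hLB (t - 1) (by linarith)
  simp only [h] at hconcat ⊢
  linarith

end ClosedOneForm

def HasRetractingNbhd {X : Type} [TopologicalSpace X] (Y : Set X) : Prop :=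
  ∃ (D : Set X) (P : X → X), IsOpen D ∧ Y ⊆ D ∧ ContinuousOn P D ∧ MapsTo P D Y ∧
    EqOn P id Y ∧ HomotopicOn D id P

theorem norm_radial_smul {E : Type*} [NormedAddCommGroup E] [NormedSpace ℝ E] {z : E}
    (hz : 0 < ‖z‖) {t : ℝ} (ht : t ∈ Icc (0 : ℝ) 1) :
    ‖((1 - t) + t / ‖z‖) • z‖ = (1 - t) * ‖z‖ + t := by
  rw [norm_smul, Real.norm_eq_abs,
    abs_of_nonneg (add_nonneg (by linarith [ht.2]) (div_nonneg ht.1 hz.le))]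
  field_simp

namespace FinCW

open Metric

variable {X : Type} [TopologicalSpace X] {c : FinCW X} {i : Fin c.n} {T : Finset (Fin c.n)}

def cell (c : FinCW X) (i : Fin c.n) : Set X := c.φ i '' ball 0 1

theorem exists_mem_cell (x : X) : ∃ i, x ∈ c.cell i :=
  let ⟨p, hp, _⟩ := c.partition x
  ⟨p.1, p.2, hp⟩

theorem eq_of_mem_cell {j : Fin c.n} {x : X} (hi : x ∈ c.cell i) (hj : x ∈ c.cell j) :
    i = j := by
  obtain ⟨z, hz, rfl⟩ := hi
  obtain ⟨w, hw, hzw⟩ := hj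
  obtain ⟨p, -, hp⟩ := c.partition (c.φ i z)
  exact congrArg Sigma.fst ((hp ⟨i, z⟩ ⟨hz, rfl⟩).trans (hp ⟨j, w⟩ ⟨hw, hzw⟩).symm)

theorem φ_sphere_notMem_cell {z : EuclideanSpace ℝ (Fin (c.dim i))}
    (hz : z ∈ sphere 0 1) : c.φ i z ∉ c.cell i := fun hzi => by
  obtain ⟨j, hdim, hzj⟩ := c.sphere_lt i z hz
  exact (eq_of_mem_cell hzi hzj ▸ hdim).false

theorem mem_cell_or_lower {z : EuclideanSpace ℝ (Fin (c.dim i))} (hz : z ∈ closedBall 0 1) :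
    c.φ i z ∈ c.cell i ∨ ∃ j, c.dim j < c.dim i ∧ c.φ i z ∈ c.cell j := by
  rcases (mem_closedBall_zero_iff.mp hz).lt_or_eq with h | h
  · exact Or.inl ⟨z, mem_ball_zero_iff.mpr h, rfl⟩
  · exact Or.inr (c.sphere_lt i z (mem_sphere_zero_iff_norm.mpr h))

theorem eq_of_φ_eq {z w : EuclideanSpace ℝ (Fin (c.dim i))} (hz : z ∈ ball 0 1)
    (hw : w ∈ closedBall 0 1) (h : c.φ i z = c.φ i w) : z = w := by
  rcases (mem_closedBall_zero_iff.mp hw).lt_or_eq with hw' | hw'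
  · exact c.injOn i hz (mem_ball_zero_iff.mpr hw') h
  · exact absurd ⟨z, hz, h⟩ (φ_sphere_notMem_cell (mem_sphere_zero_iff_norm.mpr hw'))

theorem isCompact_image {K : Set (EuclideanSpace ℝ (Fin (c.dim i)))}
    (hK : IsCompact K) (hK1 : K ⊆ closedBall 0 1) : IsCompact (c.φ i '' K) :=
  hK.image_of_continuousOn ((c.cont i).mono hK1)

def DownClosed (c : FinCW X) (T : Finset (Fin c.n)) : Prop :=
  ∀ i ∉ T, ∀ j ∈ T, c.dim j ≤ c.dim i

def subcomplex (c : FinCW X) (T : Finset (Fin c.n)) : Set X := ⋃ j ∈ T, c.cell j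

theorem subcomplex_univ : c.subcomplex Finset.univ = univ :=
  eq_univ_of_forall fun x =>
    let ⟨i, hi⟩ := exists_mem_cell (c := c) x
    mem_biUnion (Finset.mem_univ i) hi

theorem subcomplex_mono {T' : Finset (Fin c.n)} (h : T' ⊆ T) : c.subcomplex T' ⊆ c.subcomplex T :=
  biUnion_subset_biUnion_left h

theorem notMem_cell_of_mem_subcomplex_erase {x : X} (hx : x ∈ c.subcomplex (T.erase i)) :
    x ∉ c.cell i := fun hxi => by
  obtain ⟨j, hj, hxj⟩ := mem_iUnion₂.mp hx
  exact (Finset.mem_erase.mp hj).1 (eq_of_mem_cell hxj hxi)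

theorem subcomplex_diff_cell :
    c.subcomplex T \ c.cell i = c.subcomplex (T.erase i) := by
  ext x
  refine ⟨fun ⟨hx, hxi⟩ => ?_, fun hx =>
    ⟨subcomplex_mono (Finset.erase_subset i T) hx, notMem_cell_of_mem_subcomplex_erase hx⟩⟩
  obtain ⟨j, hj, hxj⟩ := mem_iUnion₂.mp hx
  exact mem_biUnion (Finset.mem_erase.mpr ⟨fun h => hxi (h ▸ hxj), hj⟩) hxj

namespace DownClosed

theorem mem_of_dim_lt (hT : c.DownClosed T) {j a : Fin c.n} (hj : j ∈ T)
    (hdim : c.dim a < c.dim j) : a ∈ T := by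
  by_contra ha
  exact (hT a ha j hj).not_gt hdim

theorem erase (hT : c.DownClosed T) (hmax : ∀ j ∈ T, c.dim j ≤ c.dim i) :
    c.DownClosed (T.erase i) := by
  intro a ha j hj
  by_cases hai : a = i
  · exact hai ▸ hmax j (Finset.mem_of_mem_erase hj)
  · exact hT a (fun haT => ha (Finset.mem_erase.mpr ⟨hai, haT⟩)) j (Finset.mem_of_mem_erase hj)

theorem image_closedBall_subset (hT : c.DownClosed T) (hi : i ∈ T) :
    c.φ i '' closedBall 0 1 ⊆ c.subcomplex T := by
  rintro _ ⟨z, hz, rfl⟩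
  rcases mem_cell_or_lower hz with h | ⟨a, hdim, ha⟩
  · exact mem_biUnion hi h
  · exact mem_biUnion (hT.mem_of_dim_lt hi hdim) ha

theorem isCompact_subcomplex (hT : c.DownClosed T) : IsCompact (c.subcomplex T) := by
  have : c.subcomplex T = ⋃ j ∈ T, c.φ j '' closedBall 0 1 :=
    (iUnion₂_mono fun j _ => image_mono ball_subset_closedBall).antisymm
      (iUnion₂_subset fun j hj => hT.image_closedBall_subset hj)
  rw [this]
  exact T.finite_toSet.isCompact_biUnion fun j _ =>
    isCompact_image (isCompact_closedBall _ _) le_rfl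

/-- The set is the lower-dimensional subcomplex together with the image of an annulus. -/
theorem isCompact_subcomplex_diff_image_ball (hT : c.DownClosed T) (hi : i ∈ T)
    (hmax : ∀ j ∈ T, c.dim j ≤ c.dim i) {ρ : ℝ} (hρ : ρ ≤ 1) :
    IsCompact (c.subcomplex T \ c.φ i '' ball 0 ρ) := by
  have key : c.subcomplex T \ c.φ i '' ball 0 ρ =
      c.subcomplex (T.erase i) ∪ c.φ i '' (closedBall 0 1 \ ball 0 ρ) := by
    ext x
    constructor
    · rintro ⟨hx, hxρ⟩
      by_cases hxi : x ∈ c.cell i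
      · obtain ⟨z, hz, rfl⟩ := hxi
        exact Or.inr ⟨z, ⟨ball_subset_closedBall hz, fun hzρ => hxρ ⟨z, hzρ, rfl⟩⟩, rfl⟩
      · exact Or.inl (subcomplex_diff_cell (c := c) ▸ ⟨hx, hxi⟩)
    · rintro (hx | ⟨z, ⟨hz, hzρ⟩, rfl⟩)
      · refine ⟨subcomplex_mono (Finset.erase_subset i T) hx, ?_⟩
        rintro ⟨z, hz, rfl⟩
        exact notMem_cell_of_mem_subcomplex_erase hx ⟨z, ball_subset_ball hρ hz, rfl⟩
      · refine ⟨hT.image_closedBall_subset hi ⟨z, hz, rfl⟩, ?_⟩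
        rintro ⟨w, hw, hwz⟩
        exact hzρ (eq_of_φ_eq (ball_subset_ball hρ hw) hz hwz ▸ hw)
  rw [key]
  exact (hT.erase hmax).isCompact_subcomplex.union
    (isCompact_image ((isCompact_closedBall _ _).diff isOpen_ball) sdiff_subset)

end DownClosed

open scoped Classical in
/-- Radially pushes the points of the closed cell `i` lying outside the image of the ball of
radius `1 / 2` towards its boundary sphere; all other points stay fixed. -/
noncomputable def radial (c : FinCW X) (i : Fin c.n) (p : X × ℝ) : X :=
  if h : p.1 ∈ c.φ i '' (closedBall 0 1 \ ball 0 (1 / 2)) then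
    c.φ i (((1 - p.2) + p.2 / ‖h.choose‖) • h.choose)
  else p.1

theorem radial_apply {z : EuclideanSpace ℝ (Fin (c.dim i))}
    (hz : z ∈ closedBall 0 1 \ ball 0 (1 / 2)) (t : ℝ) :
    c.radial i (c.φ i z, t) = c.φ i (((1 - t) + t / ‖z‖) • z) := by
  have h : c.φ i z ∈ c.φ i '' (closedBall 0 1 \ ball 0 (1 / 2)) := mem_image_of_mem _ hz
  rw [radial, dif_pos h]
  obtain ⟨hw, hwz⟩ := h.choose_spec
  set w := h.choose
  have hfix : ∀ v : EuclideanSpace ℝ (Fin (c.dim i)), ‖v‖ = 1 →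
      ((1 - t) + t / ‖v‖) • v = v := fun v hv => by simp [hv]
  by_cases hzb : z ∈ ball 0 1
  · rw [eq_of_φ_eq hzb hw.1 hwz.symm]
  by_cases hwb : w ∈ ball 0 1
  · rw [eq_of_φ_eq hwb hz.1 hwz]
  have hnorm : ∀ v : EuclideanSpace ℝ (Fin (c.dim i)), v ∈ closedBall 0 1 → v ∉ ball 0 1 →
      ‖v‖ = 1 := fun v hv hvb =>
    le_antisymm (mem_closedBall_zero_iff.mp hv) (not_lt.mp (mt mem_ball_zero_iff.mpr hvb))
  rw [hfix w (hnorm w hw.1 hwb), hfix z (hnorm z hz.1 hzb), hwz]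

theorem radial_of_notMem_cell {x : X} (hx : x ∉ c.cell i) (t : ℝ) : c.radial i (x, t) = x := by
  by_cases h : x ∈ c.φ i '' (closedBall 0 1 \ ball 0 (1 / 2))
  · obtain ⟨z, hz, rfl⟩ := h
    have hz1 : ‖z‖ = 1 := le_antisymm (mem_closedBall_zero_iff.mp hz.1)
      (not_lt.mp fun hlt => hx ⟨z, mem_ball_zero_iff.mpr hlt, rfl⟩)
    simp [radial_apply hz, hz1]
  · rw [radial, dif_neg h]

theorem radial_zero (x : X) : c.radial i (x, 0) = x := by
  by_cases h : x ∈ c.φ i '' (closedBall 0 1 \ ball 0 (1 / 2))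
  · obtain ⟨z, hz, rfl⟩ := h
    simp [radial_apply hz]
  · rw [radial, dif_neg h]

theorem radial_one_mem_subcomplex_erase (hT : c.DownClosed T) (hi : i ∈ T) {x : X}
    (hx : x ∈ c.subcomplex T) (hx' : x ∉ c.φ i '' closedBall 0 (1 / 2)) :
    c.radial i (x, 1) ∈ c.subcomplex (T.erase i) := by
  by_cases hxi : x ∈ c.cell i
  · obtain ⟨z, hz, rfl⟩ := hxi
    have hz2 : z ∈ closedBall 0 1 \ ball 0 (1 / 2) :=
      ⟨ball_subset_closedBall hz, fun h => hx' ⟨z, ball_subset_closedBall h, rfl⟩⟩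
    have hz0 : 0 < ‖z‖ := by
      have := hz2.2
      rw [mem_ball_zero_iff, not_lt] at this
      linarith
    rw [radial_apply hz2]
    have hsph : ((1 - 1) + 1 / ‖z‖) • z ∈ sphere (0 : EuclideanSpace ℝ (Fin (c.dim i))) 1 := by
      rw [mem_sphere_zero_iff_norm, norm_radial_smul hz0 ⟨zero_le_one, le_rfl⟩]
      ring
    obtain ⟨a, hdim, ha⟩ := c.sphere_lt i _ hsph
    exact mem_biUnion (Finset.mem_erase.mpr ⟨fun h => (h ▸ hdim).false,
      hT.mem_of_dim_lt hi hdim⟩) ha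
  · rw [radial_of_notMem_cell hxi]
    exact subcomplex_diff_cell (c := c) ▸ ⟨hx, hxi⟩

section T2

variable [T2Space X]

/-- On the annulus `radial` is the image of an explicit continuous map under `φ i`, which is
closed there; on the lower subcomplex it is the identity. -/
theorem homotopicOn_radial (hT : c.DownClosed T)
    (hmax : ∀ j ∈ T, c.dim j ≤ c.dim i) :
    HomotopicOn (c.subcomplex (T.erase i) ∪ c.φ i '' (closedBall 0 1 \ ball 0 (1 / 2))) id
      fun x => c.radial i (x, 1) := by
  set A : Set (EuclideanSpace ℝ (Fin (c.dim i))) := closedBall 0 1 \ ball 0 (1 / 2)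
  have hA : IsCompact A := (isCompact_closedBall _ _).diff isOpen_ball
  have hA0 : ∀ z ∈ A, 1 / 2 ≤ ‖z‖ := fun z hz => by
    have := hz.2
    rwa [mem_ball_zero_iff, not_lt] at this
  refine ⟨c.radial i, ?_, fun x _ => radial_zero x, fun x _ => rfl⟩
  rw [union_prod]
  have hlow := (hT.erase hmax).isCompact_subcomplex.prod (isCompact_Icc (a := (0 : ℝ)) (b := 1))
  have hann := (c.isCompact_image hA sdiff_subset).prod (isCompact_Icc (a := (0 : ℝ)) (b := 1))
  refine ContinuousOn.union_of_isClosed ?_ ?_ hlow.isClosed hann.isClosed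
  · exact continuousOn_fst.congr fun p hp => radial_of_notMem_cell
      (notMem_cell_of_mem_subcomplex_erase hp.1) p.2
  · rw [← image_id (Icc (0 : ℝ) 1), prod_image_image_eq]
    refine (hA.prod isCompact_Icc).continuousOn_image_of_comp
      (((c.cont i).comp continuousOn_fst fun p hp => hp.1.1).prodMk continuousOn_snd) ?_
    have hg : ContinuousOn (fun p : EuclideanSpace ℝ (Fin (c.dim i)) × ℝ =>
        ((1 - p.2) + p.2 / ‖p.1‖) • p.1) (A ×ˢ Icc 0 1) :=
      ((continuousOn_const.sub continuousOn_snd).add (continuousOn_snd.div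
        (continuous_norm.comp_continuousOn continuousOn_fst)
        fun p hp => (lt_of_lt_of_le one_half_pos (hA0 p.1 hp.1)).ne')).smul continuousOn_fst
    refine ((c.cont i).comp hg fun p hp => ?_).congr fun p hp => radial_apply hp.1 p.2
    have h0 := hA0 p.1 hp.1
    rw [mem_closedBall_zero_iff, norm_radial_smul (by linarith) hp.2]
    nlinarith [mem_closedBall_zero_iff.mp hp.1.1, hp.2.1, hp.2.2]

/-- Follow the retraction onto the subcomplex of `T` by the radial deformation of the cell `i`,
after removing the points sent into the half-radius ball of that cell. -/
theorem DownClosed.hasRetractingNbhd_erase (hT : c.DownClosed T) (hi : i ∈ T)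
    (hmax : ∀ j ∈ T, c.dim j ≤ c.dim i)
    (h : HasRetractingNbhd (c.subcomplex T)) : HasRetractingNbhd (c.subcomplex (T.erase i)) := by
  obtain ⟨D, P, hDo, hYD, hP, hPY, hPid, hhom⟩ := h
  set B := c.φ i '' closedBall 0 (1 / 2)
  have hBcell : B ⊆ c.cell i := image_mono (closedBall_subset_ball (by norm_num))
  have hB : IsClosed B := (c.isCompact_image (isCompact_closedBall _ _)
    (closedBall_subset_closedBall (by norm_num))).isClosed
  set D' := D ∩ P ⁻¹' Bᶜ
  have hPA : MapsTo P D'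
      (c.subcomplex (T.erase i) ∪ c.φ i '' (closedBall 0 1 \ ball 0 (1 / 2))) := by
    rintro x ⟨hxD, hxB⟩
    by_cases hxi : P x ∈ c.cell i
    · obtain ⟨z, hz, hzx⟩ := hxi
      refine Or.inr ⟨z, ⟨ball_subset_closedBall hz, fun hz' => hxB ?_⟩, hzx⟩
      exact hzx ▸ mem_image_of_mem _ (ball_subset_closedBall hz')
    · exact Or.inl (subcomplex_diff_cell (c := c) ▸ ⟨hPY hxD, hxi⟩)
  have hrad := homotopicOn_radial hT hmax (i := i)
  refine ⟨D', fun x => c.radial i (P x, 1), hP.isOpen_inter_preimage hDo hB.isOpen_compl,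
    fun y hy => ?_, ?_, fun x hx => radial_one_mem_subcomplex_erase hT hi (hPY hx.1) hx.2,
    fun y hy => ?_, (hhom.mono inter_subset_left).trans (hrad.comp (hP.mono inter_subset_left) hPA)⟩
  · have hyD := hYD (subcomplex_mono (Finset.erase_subset i T) hy)
    refine ⟨hyD, fun hyB => notMem_cell_of_mem_subcomplex_erase hy (hBcell ?_)⟩
    rwa [show P y = y from hPid (subcomplex_mono (Finset.erase_subset i T) hy)] at hyB
  · exact hrad.continuousOn_right.comp (hP.mono inter_subset_left) hPA
  · show c.radial i (P y, 1) = y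
    rw [hPid (subcomplex_mono (Finset.erase_subset i T) hy)]
    exact radial_of_notMem_cell (notMem_cell_of_mem_subcomplex_erase hy) 1

/-- Starting from the whole complex, remove the cells outside `T` one at a time, in order of
decreasing dimension. -/
theorem DownClosed.hasRetractingNbhd (hT : c.DownClosed T) :
    HasRetractingNbhd (c.subcomplex T) := by
  classical
  refine Finset.strongDownwardInductionOn (n := Fintype.card (Fin c.n))
    (p := fun T => c.DownClosed T → HasRetractingNbhd (c.subcomplex T)) T
    (fun T ih _ hT => ?_) (Finset.card_le_univ T) hT
  by_cases hTu : T = Finset.univ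
  · rw [hTu, subcomplex_univ]
    exact ⟨univ, id, isOpen_univ, subset_rfl, continuousOn_id, mapsTo_univ _ _, fun _ _ => rfl,
      Prod.fst, continuousOn_fst, fun _ _ => rfl, fun _ _ => rfl⟩
  obtain ⟨j, hj⟩ := not_forall.mp (mt Finset.eq_univ_iff_forall.mpr hTu)
  obtain ⟨i, hiT, hmin⟩ := Tᶜ.exists_min_image c.dim ⟨j, Finset.mem_compl.mpr hj⟩
  have hi : i ∉ T := Finset.mem_compl.mp hiT
  have hT' : c.DownClosed (insert i T) := by
    intro a ha j hj
    have ha' : a ∉ T := fun h => ha (Finset.mem_insert_of_mem h)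
    rcases Finset.mem_insert.mp hj with rfl | hj
    · exact hmin a (Finset.mem_compl.mpr ha')
    · exact hT a ha' j hj
  have hmax : ∀ j ∈ insert i T, c.dim j ≤ c.dim i := fun j hj =>
    (Finset.mem_insert.mp hj).elim (fun h => h ▸ le_rfl) (hT i hi j)
  simpa [Finset.erase_insert hi] using hT'.hasRetractingNbhd_erase (Finset.mem_insert_self i T)
    hmax (ih (Finset.card_le_univ _) (Finset.ssubset_insert hi) hT')

/-- A point `φ i z` of a cell has a neighbourhood that retracts into the image of a ball around
`z` inside the cell, which is contractible. -/
theorem exists_isOpen_nullhomotopicIn (c : FinCW X) (x : X) :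
    ∃ O, IsOpen O ∧ x ∈ O ∧ NullhomotopicIn X O := by
  classical
  obtain ⟨i, z, hz, rfl⟩ := exists_mem_cell (c := c) x
  set T := Finset.univ.filter fun j => c.dim j ≤ c.dim i
  have hT : c.DownClosed T := fun a ha j hj => by
    simp only [T, Finset.mem_filter, Finset.mem_univ, true_and, not_le] at ha hj
    omega
  have hi : i ∈ T := by simp [T]
  have hmax : ∀ j ∈ T, c.dim j ≤ c.dim i := fun j hj => by simpa [T] using hj
  obtain ⟨D, P, hDo, hYD, hP, hPY, hPid, hhom⟩ := hT.hasRetractingNbhd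
  have hz1 := mem_ball_zero_iff.mp hz
  set ρ := (‖z‖ + 1) / 2
  have hρ1 : ρ < 1 := by simp only [ρ]; linarith
  have hzρ : z ∈ ball 0 ρ := mem_ball_zero_iff.mpr (by simp only [ρ]; linarith)
  set O := D ∩ P ⁻¹' (c.subcomplex T \ c.φ i '' ball 0 ρ)ᶜ
  have hxY : c.φ i z ∈ c.subcomplex T := mem_biUnion hi ⟨z, hz, rfl⟩
  have hPO : MapsTo P O (c.φ i '' closedBall 0 ρ) := fun y hy => by
    have := hy.2
    rw [mem_preimage, mem_compl_iff, mem_sdiff, not_and_not_right] at this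
    exact image_mono ball_subset_closedBall (this (hPY hy.1))
  refine ⟨O, hP.isOpen_inter_preimage hDo
      (hT.isCompact_subcomplex_diff_image_ball hi hmax hρ1.le).isClosed.isOpen_compl,
    ⟨hYD hxY, by simp [hPid hxY, mem_image_of_mem _ hzρ]⟩,
    NullhomotopicIn.of_homotopicOn (x₀ := c.φ i 0) ((hhom.mono inter_subset_left).trans ?_)⟩
  exact (homotopicOn_image_closedBall ((c.cont i).mono (closedBall_subset_closedBall hρ1.le))
    ((c.injOn i).mono (closedBall_subset_ball hρ1))).comp (hP.mono inter_subset_left) hPO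

theorem exists_catLE_univ [CompactSpace X] (c : FinCW X) : ∃ k, CatLE X univ k :=
  exists_catLE_univ_of_forall_nullhomotopicIn c.exists_isOpen_nullhomotopicIn

end T2

end FinCW

theorem bigCatForm_le_cat_sub_one_general
    (X : Type) [TopologicalSpace X] [T2Space X] [CompactSpace X]
    (c : FinCW X) (ω : ClosedOneForm X)
    (hξ : ∃ γ : ℝ → X, ContinuousOn γ (Set.Icc (0 : ℝ) 1) ∧ γ 0 = γ 1 ∧
      ω.pathIntegral γ 0 1 ≠ 0) :
    ω.bigCatForm ≤ catSpace X - 1 := by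
  have : Nonempty X := let ⟨γ, _⟩ := hξ; ⟨γ 0⟩
  have hcat : CatLE X univ (catSpace X) := Nat.sInf_mem c.exists_catLE_univ
  obtain ⟨k, hk⟩ := Nat.exists_eq_add_one_of_ne_zero hcat.pos.ne'
  rw [hk] at hcat ⊢
  exact Nat.sInf_le (ω.bigCatLE_of_catLE_succ hcat hξ)

/-- **(Lemma 5.9 / Lemma `lm10`.)**  Let `X` be a connected finite CW complex
and `ω` a continuous closed 1-form on `X` whose cohomology class is nonzero,
i.e. `∫_γ ω ≠ 0` for some loop `γ` in `X`.  Then `Cat(X, ω) ≤ cat(X) − 1`. -/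
theorem bigCatForm_le_cat_sub_one
    (X : Type) [TopologicalSpace X] [T2Space X] [CompactSpace X] [ConnectedSpace X]
    (c : FinCW X) (ω : ClosedOneForm X)
    (hξ : ∃ γ : ℝ → X, ContinuousOn γ (Set.Icc (0 : ℝ) 1) ∧ γ 0 = γ 1 ∧
      ω.pathIntegral γ 0 1 ≠ 0) :
    ω.bigCatForm ≤ catSpace X - 1 :=
  bigCatForm_le_cat_sub_one_general X c ω hξ
end

section
/- Let v be a smooth vector field on a closed (compact, boundaryless) smooth manifold M generating a flow Φ : M × ℝ → M (write x·t = Φ(x,t)), and fix a metric d on M inducing its topology. Let Z be a connected component of the chain recurrent set R of Φ which is isolated in R, i.e., there exists a neighborhood U₀ of Z with U₀ ∩ R = Z. Then for every neighborhood W of Z there exists an open neighborhood B of Z contained in W with the following two properties: (A) for every x ∈ M the set J_x = {t ∈ ℝ : x·t ∈ B} is convex, i.e., it is either empty or an interval; and (B) letting A be the set of points x ∈ M for which J_x is nonempty and bounded below, the function A → ℝ, x ↦ inf J_x, is continuous. -/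
/-!
For a closed invariant set `Z`, the cheapest jump sizes of chains from `Z`, taken over all time
scales, combine into a continuous `g ≥ 0` that vanishes on `Z`, does not increase along the flow,
and vanishes only at points reachable from `Z` by chains of every scale and accuracy. The orbit average
`G x = ∑ 2⁻ⁿ ∫ₙⁿ⁺¹ g (x·t) dt` keeps these properties and is moreover rigid: if it does not
decrease on some time interval, it is constant on the whole forward orbit. The reversed flow gives
a second such function `H`, which increases along the flow and vanishes only at points from which
`Z` is reachable by chains.

For an isolated component `Z` of the chain recurrent set, a point chain-reachable both from and to
`Z` lies in `Z`: otherwise chains from `Z` to it cross a thin shell around `Z`, and a limit of the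
crossing points is chain recurrent, lies near `Z`, but not in `Z`. So `G` and `H` vanish together
exactly on `Z`, and by compactness `B = {G < ε, H < ε}` lies in `W` for small `ε`. Along an orbit
`G` decreases and `H` increases, so the times spent in `B` form an interval; its infimum is where
`G` crosses the level `ε`, which by rigidity happens transversally, so it depends continuously
on the starting point.
-/

open Set Filter
open scoped Manifold Topology

/-- A smooth vector field on `M`: a smooth section of the tangent bundle. -/
def IsSmoothVF {n : ℕ} {M : Type} [TopologicalSpace M]
    [ChartedSpace (EuclideanSpace ℝ (Fin n)) M]
    [IsManifold (𝓡 n) (⊤ : ℕ∞) M]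
    (v : (x : M) → TangentSpace (𝓡 n) x) : Prop :=
  ContMDiff (𝓡 n) (𝓡 n).tangent (⊤ : ℕ∞)
    (fun x => (⟨x, v x⟩ : TangentBundle (𝓡 n) M))

/-- `γ : ℝ → M` is an integral curve of the vector field `v`:
`γ'(t) = v(γ(t))` for all `t`. -/
def IsIntCurve {n : ℕ} {M : Type} [TopologicalSpace M]
    [ChartedSpace (EuclideanSpace ℝ (Fin n)) M]
    [IsManifold (𝓡 n) (⊤ : ℕ∞) M]
    (v : (x : M) → TangentSpace (𝓡 n) x) (γ : ℝ → M) : Prop :=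
  ∀ t : ℝ, HasMFDerivAt 𝓘(ℝ, ℝ) (𝓡 n) γ t
    ((1 : ℝ →L[ℝ] ℝ).smulRight (v (γ t)))

/-- `Φ : M × ℝ → M` (curried) is the flow generated by the vector field `v`:
it is continuous, starts at the identity, satisfies the group law, and each
trajectory `t ↦ Φ x t` is an integral curve of `v`. -/
def IsFlowOf {n : ℕ} {M : Type} [TopologicalSpace M]
    [ChartedSpace (EuclideanSpace ℝ (Fin n)) M]
    [IsManifold (𝓡 n) (⊤ : ℕ∞) M]
    (v : (x : M) → TangentSpace (𝓡 n) x) (Φ : M → ℝ → M) : Prop :=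
  Continuous (fun p : M × ℝ => Φ p.1 p.2) ∧ (∀ x : M, Φ x 0 = x) ∧
    (∀ (x : M) (s t : ℝ), Φ x (s + t) = Φ (Φ x s) t) ∧
    ∀ x : M, IsIntCurve v (Φ x)

/-- The chain recurrent set of the flow `Φ` (with respect to the metric `d`):
points `x` such that for all `δ > 0` and `T > 1` there is a `(δ,T)`-chain
`x = x₀, x₁, …, x_N = x`, with times `tᵢ ≥ T` and
`d(x_{i-1}·t_i, x_i) < δ`. -/
def chainRecurrentSet {M : Type} [MetricSpace M] (Φ : M → ℝ → M) : Set M :=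
  {x : M | ∀ δ > (0 : ℝ), ∀ T > (1 : ℝ),
    ∃ (N : ℕ) (xs : ℕ → M) (ts : ℕ → ℝ), 0 < N ∧ xs 0 = x ∧ xs N = x ∧
      ∀ i < N, T ≤ ts i ∧ dist (Φ (xs i) (ts i)) (xs (i + 1)) < δ}

open Metric

theorem Relation.transGen_iff_exists_seq {β : Type*} {r : β → β → Prop} {a b : β} :
    Relation.TransGen r a b ↔ ∃ (N : ℕ) (xs : ℕ → β), 0 < N ∧ xs 0 = a ∧ xs N = b ∧
      ∀ i < N, r (xs i) (xs (i + 1)) := by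
  constructor
  · intro h
    induction h with
    | @single c hac =>
      refine ⟨1, fun i => if i = 0 then a else c, one_pos, rfl, rfl, fun i hi => ?_⟩
      obtain rfl : i = 0 := by omega
      simpa using hac
    | @tail c d _ hcd ih =>
      obtain ⟨N, xs, hN, h0, hNc, hr⟩ := ih
      refine ⟨N + 1, fun i => if i ≤ N then xs i else d, N.succ_pos, by simp [h0], by simp,
        fun i hi => ?_⟩
      rcases (Nat.lt_succ_iff.mp hi).lt_or_eq with hi | rfl
      · simpa [hi.le, Nat.succ_le_of_lt hi] using hr i hi
      · simpa [hNc] using hcd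
  · rintro ⟨N, xs, hN, rfl, rfl, hr⟩
    exact Relation.TransGen.lift xs (fun _ _ h => h) _ _ <|
      transGen_of_succ_of_lt (fun i j => r (xs i) (xs j)) (fun i hi => by simpa using hr i hi.2) hN

theorem exists_mem_Icc_apply_mem_Icc {f : ℝ → ℝ} {a b c d : ℝ} (hab : a ≤ b)
    (hf : ContinuousOn f (Icc a b)) (ha : f a ≤ d) (hb : c ≤ f b) (hcd : c ≤ d) :
    ∃ u ∈ Icc a b, f u ∈ Icc c d := by
  rcases le_or_gt c (f a) with hca | hca
  · exact ⟨a, left_mem_Icc.2 hab, hca, ha⟩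
  · obtain ⟨u, hu, hfu⟩ := intermediate_value_Icc hab hf ⟨hca.le, hb⟩
    exact ⟨u, hu, hfu.ge, hfu.le.trans hcd⟩

theorem IsLowerSet.bddBelow_and_csInf_inter_eq {β : Type*} [ConditionallyCompleteLinearOrder β]
    {U V : Set β} (hV : IsLowerSet V) (hne : (U ∩ V).Nonempty)
    (hbdd : BddBelow (U ∩ V)) : BddBelow U ∧ sInf (U ∩ V) = sInf U := by
  obtain ⟨t₀, ht₀⟩ := hne
  have hmin : ∀ u ∈ U, min u t₀ ∈ U ∩ V := fun u hu => by
    rcases le_total u t₀ with h | h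
    · rw [min_eq_left h]
      exact ⟨hu, hV h ht₀.2⟩
    · rwa [min_eq_right h]
  have hU_bdd : BddBelow U := hbdd.imp fun b hb u hu => (hb (hmin u hu)).trans (min_le_left u t₀)
  refine ⟨hU_bdd, le_antisymm (le_csInf ⟨t₀, ht₀.1⟩ fun u hu => ?_)
    (csInf_le_csInf hU_bdd ⟨t₀, ht₀⟩ inter_subset_left)⟩
  exact (csInf_le hbdd (hmin u hu)).trans (min_le_left u t₀)

theorem AntitoneOn.eq_of_add_period {f : ℝ → ℝ} {s : ℝ} (hf : AntitoneOn f (Ici 0)) (hs : 0 < s)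
    (hper : ∀ t ≥ 0, f (t + s) = f t) {t : ℝ} (ht : 0 ≤ t) : f t = f 0 := by
  have hmul : ∀ k : ℕ, f (k * s) = f 0 := by
    intro k
    induction k with
    | zero => simp
    | succ k ih => rw [Nat.cast_succ, add_one_mul, hper _ (by positivity), ih]
  obtain ⟨k, hk⟩ := exists_nat_ge (t / s)
  have htk : t ≤ k * s := (div_le_iff₀ hs).1 hk
  refine le_antisymm (hf (mem_Ici.2 le_rfl) ht ht) ?_
  calc f 0 = f (k * s) := (hmul k).symm
    _ ≤ f t := hf ht (mem_Ici.2 (by positivity)) htk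

theorem IsClosed.connectedComponentIn {X : Type*} [TopologicalSpace X] {F : Set X}
    (hF : IsClosed F) (x : X) : IsClosed (connectedComponentIn F x) := by
  by_cases hx : x ∈ F
  · exact isClosed_of_closure_subset
      (isPreconnected_connectedComponentIn.closure.subset_connectedComponentIn
        (subset_closure (mem_connectedComponentIn hx))
        (closure_minimal (connectedComponentIn_subset F x) hF))
  · rw [connectedComponentIn_eq_empty hx]
    exact isClosed_empty

theorem exists_pos_setOf_lt_subset {X : Type*} [TopologicalSpace X] [CompactSpace X] {f : X → ℝ}
    {W : Set X} (hf : Continuous f) (hW : IsOpen W) (h : ∀ x, f x ≤ 0 → x ∈ W) :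
    ∃ ε > 0, {x | f x < ε} ⊆ W := by
  obtain ⟨ε, hε, hεf⟩ := hW.isClosed_compl.isCompact.exists_forall_le' hf.continuousOn
    (a := 0) fun x hx => not_le.1 fun h' => hx (h x h')
  exact ⟨ε, hε, fun x hx => by_contra fun hxW => (hεf x hxW).not_gt hx⟩

theorem IsInvariant.connectedComponentIn {X : Type*} [TopologicalSpace X] {ϕ : Flow ℝ X}
    {s : Set X} (hs : IsInvariant ϕ s) (x : X) : IsInvariant ϕ (connectedComponentIn s x) := by
  intro t z hz
  rw [connectedComponentIn_eq hz]
  refine (isPreconnected_range (ϕ.continuous continuous_id continuous_const)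
    ).subset_connectedComponentIn ⟨0, ϕ.map_zero_apply z⟩ ?_ ⟨t, rfl⟩
  exact range_subset_iff.2 fun t => hs t (connectedComponentIn_subset _ _ hz)

section HalfPowSum

variable {a b : ℕ → ℝ} {C : ℝ}

theorem summable_half_pow_mul (h0 : ∀ n, 0 ≤ a n) (hC : ∀ n, a n ≤ C) :
    Summable fun n => (1 / 2 : ℝ) ^ n * a n :=
  (summable_geometric_two.mul_right C).of_nonneg_of_le (fun n => by have := h0 n; positivity)
    fun n => mul_le_mul_of_nonneg_left (hC n) (by positivity)

theorem tsum_half_pow_mul_le_tsum (h0 : ∀ n, 0 ≤ a n) (hab : ∀ n, a n ≤ b n) (hC : ∀ n, b n ≤ C) :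
    ∑' n, (1 / 2 : ℝ) ^ n * a n ≤ ∑' n, (1 / 2 : ℝ) ^ n * b n :=
  Summable.tsum_le_tsum (fun n => mul_le_mul_of_nonneg_left (hab n) (by positivity))
    (summable_half_pow_mul h0 fun n => (hab n).trans (hC n))
    (summable_half_pow_mul (fun n => (h0 n).trans (hab n)) hC)

theorem tsum_half_pow_mul_lt_tsum (h0 : ∀ n, 0 ≤ a n) (hab : ∀ n, a n ≤ b n) (hC : ∀ n, b n ≤ C)
    {i : ℕ} (hi : a i < b i) : ∑' n, (1 / 2 : ℝ) ^ n * a n < ∑' n, (1 / 2 : ℝ) ^ n * b n :=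
  Summable.tsum_lt_tsum (fun n => mul_le_mul_of_nonneg_left (hab n) (by positivity))
    (mul_lt_mul_of_pos_left hi (by positivity))
    (summable_half_pow_mul h0 fun n => (hab n).trans (hC n))
    (summable_half_pow_mul (fun n => (h0 n).trans (hab n)) hC)

theorem tsum_half_pow_mul_eq_zero_iff (h0 : ∀ n, 0 ≤ a n) (hC : ∀ n, a n ≤ C) :
    ∑' n, (1 / 2 : ℝ) ^ n * a n = 0 ↔ ∀ n, a n = 0 := by
  rw [← (summable_half_pow_mul h0 hC).hasSum_iff,
    hasSum_zero_iff_of_nonneg fun n => by have := h0 n; positivity, funext_iff]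
  simp

theorem continuous_tsum_half_pow_mul {X : Type*} [TopologicalSpace X] {f : ℕ → X → ℝ}
    (hf : ∀ n, Continuous (f n)) (h0 : ∀ n x, 0 ≤ f n x) (hC : ∀ n x, f n x ≤ C) :
    Continuous fun x => ∑' n, (1 / 2 : ℝ) ^ n * f n x := by
  refine continuous_tsum (fun n => continuous_const.mul (hf n))
    (summable_geometric_two.mul_right C) fun n x => ?_
  rw [Real.norm_of_nonneg (by have := h0 n x; positivity)]
  exact mul_le_mul_of_nonneg_left (hC n x) (by positivity)

end HalfPowSum

namespace Flow

section Chains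

variable {α : Type*} [PseudoMetricSpace α] (ϕ : Flow ℝ α)

theorem exists_pos_dist_flow_le [CompactSpace α] (S : ℝ) {ε : ℝ} (hε : 0 < ε) :
    ∃ δ > 0, ∀ x y : α, dist x y ≤ δ → ∀ t ∈ Icc (-S) S, dist (ϕ t x) (ϕ t y) ≤ ε := by
  have hF : UniformContinuous fun p : α × Icc (-S) S => ϕ p.2 p.1 :=
    CompactSpace.uniformContinuous_of_continuous
      (ϕ.continuous (continuous_subtype_val.comp continuous_snd) continuous_fst)
  obtain ⟨δ, hδ, hF⟩ := Metric.uniformContinuous_iff.1 hF ε hε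
  refine ⟨δ / 2, half_pos hδ, fun x y hxy t ht =>
    (hF (a := (x, ⟨t, ht⟩)) (b := (y, ⟨t, ht⟩)) ?_).le⟩
  rw [Prod.dist_eq, dist_self, max_eq_left dist_nonneg]
  linarith

def Hop (T c : ℝ) (x y : α) : Prop :=
  ∃ t ∈ Icc T (2 * T), dist (ϕ t x) y ≤ c

/-- The bound `2T` on flight times is what makes chains stable under perturbations of their
points; any flight time `≥ T` is still allowed, see `ChainReach.of_le_time`. -/
def ChainReach (T c : ℝ) : α → α → Prop :=
  Relation.TransGen (ϕ.Hop T c)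

variable {ϕ} {T T' c c' ε : ℝ} {x y z : α}

theorem Hop.nonneg (h : ϕ.Hop T c x y) : 0 ≤ c :=
  let ⟨_, _, h⟩ := h
  dist_nonneg.trans h

theorem Hop.mono (h : ϕ.Hop T c x y) (hc : c ≤ c') : ϕ.Hop T c' x y :=
  let ⟨t, ht, h⟩ := h
  ⟨t, ht, h.trans hc⟩

namespace ChainReach

theorem single (h : ϕ.Hop T c x y) : ϕ.ChainReach T c x y :=
  Relation.TransGen.single h

theorem trans (hxy : ϕ.ChainReach T c x y) (hyz : ϕ.ChainReach T c y z) :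
    ϕ.ChainReach T c x z :=
  Relation.TransGen.trans hxy hyz

theorem mono (h : ϕ.ChainReach T c x y) (hc : c ≤ c') : ϕ.ChainReach T c' x y :=
  Relation.TransGen.mono (fun _ _ h => h.mono hc) _ _ h

theorem nonneg (h : ϕ.ChainReach T c x y) : 0 ≤ c :=
  let ⟨_, _, h⟩ := Relation.TransGen.tail'_iff.1 h
  h.nonneg

theorem of_le_time (hT : 0 < T) {t : ℝ} (ht : T ≤ t) (h : dist (ϕ t x) y ≤ c) :
    ϕ.ChainReach T c x y := by
  obtain ⟨n, hn⟩ := exists_nat_ge (t / T)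
  induction n generalizing x t with
  | zero =>
    rw [Nat.cast_zero, div_le_iff₀ hT, zero_mul] at hn
    linarith
  | succ n ih =>
    rcases le_or_gt t (2 * T) with h2 | h2
    · exact single ⟨t, ⟨ht, h2⟩, h⟩
    refine Relation.TransGen.head (b := ϕ T x)
      ⟨T, ⟨le_rfl, by linarith⟩, by rw [dist_self]; exact dist_nonneg.trans h⟩
      (ih (t := t - T) (by linarith) ?_ ?_)
    · rwa [← map_add, sub_add_cancel]
    · rw [div_le_iff₀ hT] at hn ⊢
      push_cast at hn
      linarith

theorem add_dist (h : ϕ.ChainReach T c x y) (y' : α) : ϕ.ChainReach T (c + dist y y') x y' := by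
  obtain ⟨b, hxb, t, ht, hby⟩ := Relation.TransGen.tail'_iff.1 h
  exact Relation.TransGen.tail'
    (Relation.ReflTransGen.mono (fun _ _ h => h.mono (le_add_of_nonneg_right dist_nonneg)) _ _ hxb)
    ⟨t, ht, (dist_triangle _ y _).trans (add_le_add_left hby _)⟩

theorem of_le_scale (h : ϕ.ChainReach T' c x y) (hT : 0 < T) (hTT' : T ≤ T') :
    ϕ.ChainReach T c x y :=
  Relation.TransGen.closed (fun _ _ ⟨_, ht, h⟩ => of_le_time hT (hTT'.trans ht.1) h) _ _ h

theorem flow_right (h : ϕ.ChainReach T c x y) (hT : 0 < T) {u : ℝ} (hu : 0 ≤ u)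
    (hm : ∀ a, dist a y ≤ c → dist (ϕ u a) (ϕ u y) ≤ ε) (hcε : c ≤ ε) :
    ϕ.ChainReach T ε x (ϕ u y) := by
  obtain ⟨b, hxb, t, ht, hby⟩ := Relation.TransGen.tail'_iff.1 h
  refine Relation.TransGen.trans_right
    (Relation.ReflTransGen.mono (fun _ _ h => h.mono hcε) _ _ hxb)
    (of_le_time hT (t := u + t) (by linarith [ht.1]) ?_)
  rw [map_add]
  exact hm _ hby

end ChainReach

variable [CompactSpace α]

theorem exists_pos_chainReach_of_dist_le (T : ℝ) (hε : 0 < ε) :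
    ∃ δ > 0, ∀ {c : ℝ} {x x' y : α}, dist x' x ≤ δ → ϕ.ChainReach T c x y →
      ϕ.ChainReach T (c + ε) x' y := by
  obtain ⟨δ, hδ, hm⟩ := ϕ.exists_pos_dist_flow_le (2 * T) hε
  refine ⟨δ, hδ, fun {c x x' y} hx h => ?_⟩
  obtain ⟨b, ⟨t, ht, hxb⟩, hby⟩ := Relation.TransGen.head'_iff.1 h
  refine Relation.TransGen.head' ⟨t, ht, ?_⟩
    (Relation.ReflTransGen.mono (fun _ _ h => h.mono (le_add_of_nonneg_right hε.le)) _ _ hby)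
  calc dist (ϕ t x') b ≤ dist (ϕ t x') (ϕ t x) + dist (ϕ t x) b := dist_triangle _ _ _
    _ ≤ ε + c := add_le_add (hm _ _ hx t ⟨by linarith [ht.1, ht.2], ht.2⟩) hxb
    _ = c + ε := add_comm _ _

theorem exists_pos_chainReach_flow (s : ℝ) (hε : 0 < ε) :
    ∃ δ > 0, ∀ {T : ℝ} {x y : α}, ϕ.ChainReach T δ x y → ϕ.ChainReach T ε (ϕ s x) (ϕ s y) := by
  obtain ⟨δ, hδ, hm⟩ := ϕ.exists_pos_dist_flow_le |s| hε
  refine ⟨δ, hδ, fun h => Relation.TransGen.lift (ϕ s) (fun a b ⟨t, ht, hab⟩ => ⟨t, ht, ?_⟩) _ _ h⟩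
  rw [← map_add, add_comm, map_add]
  exact hm _ _ hab s ⟨neg_abs_le s, le_abs_self s⟩

theorem exists_pos_chainReach_of_reverse (T : ℝ) (hε : 0 < ε) :
    ∃ δ > 0, ∀ {x y : α}, ϕ.reverse.ChainReach T δ x y → ϕ.ChainReach T ε y x := by
  obtain ⟨δ, hδ, hm⟩ := ϕ.exists_pos_dist_flow_le (2 * T) hε
  refine ⟨δ, hδ, fun h => Relation.TransGen.lift id (fun a b ⟨t, ht, hab⟩ => ⟨t, ht, ?_⟩) _ _
    (Relation.transGen_swap.2 h)⟩
  calc dist (ϕ t a) b = dist (ϕ t a) (ϕ t (ϕ (-t) b)) := by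
        rw [← map_add, add_neg_cancel, map_zero_apply]
    _ ≤ ε := hm _ _ (by rw [dist_comm]; exact hab) t ⟨by linarith [ht.1, ht.2], ht.2⟩

end Chains

section ChainSets

variable {α : Type*} [PseudoMetricSpace α] (ϕ : Flow ℝ α)

def chainFrom (Z : Set α) : Set α :=
  {x | ∀ T > 0, ∀ δ > 0, ∃ z ∈ Z, ϕ.ChainReach T δ z x}

def chainTo (Z : Set α) : Set α :=
  {x | ∀ T > 0, ∀ δ > 0, ∃ z ∈ Z, ϕ.ChainReach T δ x z}

variable {ϕ} {Z : Set α} {T ε : ℝ}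

/-- The chain from the crossing point ends at `ϕ T y` rather than `y` because the crossing point
may lie less than `T` before the end of its flight. -/
theorem ChainReach.exists_shell_crossing (hZ : IsInvariant ϕ Z) (hT : 0 < T) {η δ : ℝ}
    (hη : 0 < η) (hδη : δ ≤ η) (hδε : δ ≤ ε)
    (hm : ∀ a b, dist a b ≤ δ → ∀ u ∈ Icc 0 (2 * T), dist (ϕ u a) (ϕ u b) ≤ ε) {z y : α}
    (hz : z ∈ Z) (h : ϕ.ChainReach T δ z y) (hy : 2 * η < infDist y Z) :
    ∃ w, infDist w Z ∈ Icc η (2 * η) ∧ (∃ z' ∈ Z, ϕ.ChainReach T ε z' w) ∧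
      ϕ.ChainReach T ε w (ϕ T y) := by
  induction h with
  | @single y hop =>
    obtain ⟨t, -, hzy⟩ := hop
    have := infDist_le_dist_of_mem (x := y) (hZ t hz)
    rw [dist_comm] at this
    linarith
  | @tail b y hzb hop ih =>
    obtain ⟨t, ht, hby⟩ := hop
    have hend : dist (ϕ (t + T) b) (ϕ T y) ≤ ε := by
      rw [add_comm, map_add]
      exact hm _ _ hby T ⟨hT.le, by linarith⟩
    by_cases hb : 2 * η < infDist b Z
    · obtain ⟨w, hw, hzw, hwb⟩ := ih hb
      exact ⟨w, hw, hzw, hwb.trans (.single ⟨t, ht, by rwa [← map_add]⟩)⟩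
    have hflight : η ≤ infDist (ϕ t b) Z := by
      have := infDist_le_infDist_add_dist (s := Z) (x := y) (y := ϕ t b)
      rw [dist_comm] at this
      linarith
    obtain ⟨u, hu, hwu⟩ := exists_mem_Icc_apply_mem_Icc (f := fun u => infDist (ϕ u b) Z) (a := 0)
      (c := η) (d := 2 * η) (by linarith [ht.1])
      ((continuous_infDist_pt Z).comp (ϕ.continuous continuous_id continuous_const)).continuousOn
      (by rw [map_zero_apply]; linarith) hflight (by linarith)
    refine ⟨ϕ u b, hwu, ⟨z, hz, ChainReach.flow_right hzb hT hu.1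
      (fun a ha => hm a b ha u ⟨hu.1, hu.2.trans ht.2⟩) hδε⟩,
      .of_le_time hT (t := t - u + T) (by linarith [hu.2]) ?_⟩
    rwa [← map_add, show t - u + T + u = t + T by ring]

variable [CompactSpace α]

theorem isInvariant_chainTo (hZ : IsInvariant ϕ Z) : IsInvariant ϕ (ϕ.chainTo Z) := by
  intro s x hx T hT δ hδ
  obtain ⟨δ₁, hδ₁, hflow⟩ := ϕ.exists_pos_chainReach_flow s hδ
  obtain ⟨z, hz, hxz⟩ := hx T hT δ₁ hδ₁
  exact ⟨ϕ s z, hZ s hz, hflow hxz⟩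

theorem chainFrom_reverse_subset_chainTo : ϕ.reverse.chainFrom Z ⊆ ϕ.chainTo Z := by
  intro x hx T hT δ hδ
  obtain ⟨δ₁, hδ₁, hrev⟩ := ϕ.exists_pos_chainReach_of_reverse T hδ
  obtain ⟨z, hz, hzx⟩ := hx T hT δ₁ hδ₁
  exact ⟨z, hz, hrev hzx⟩

theorem exists_mem_chainFrom_inter_chainTo {K : Set α} (hK : IsClosed K)
    (h : ∀ T > 0, ∀ δ > 0, ∃ w ∈ K, (∃ z ∈ Z, ϕ.ChainReach T δ z w) ∧
      ∃ z ∈ Z, ϕ.ChainReach T δ w z) :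
    ∃ q ∈ K, q ∈ ϕ.chainFrom Z ∩ ϕ.chainTo Z := by
  choose w hwK hwfrom hwto using fun n : ℕ =>
    h (n + 1) n.cast_add_one_pos (1 / (n + 1)) (by positivity)
  obtain ⟨q, hq⟩ := exists_clusterPt_of_compactSpace (map w atTop)
  have hfreq : ∀ r > 0, ∀ T δ : ℝ, 0 < δ →
      ∃ n : ℕ, T ≤ n + 1 ∧ 1 / ((n : ℝ) + 1) ≤ δ ∧ dist (w n) q < r := by
    intro r hr T δ hδ
    have hev : ∀ᶠ n : ℕ in atTop, T ≤ (n : ℝ) + 1 ∧ 1 / ((n : ℝ) + 1) ≤ δ :=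
      ((tendsto_natCast_atTop_atTop.atTop_add tendsto_const_nhds).eventually_ge_atTop T).and
        (tendsto_one_div_add_atTop_nhds_zero_nat.eventually (ge_mem_nhds hδ))
    obtain ⟨n, hn, hTn, hδn⟩ :=
      ((mapClusterPt_iff_frequently.1 hq _ (ball_mem_nhds q hr)).and_eventually hev).exists
    exact ⟨n, hTn, hδn, hn⟩
  refine ⟨q, hK.mem_of_mapClusterPt hq (.of_forall hwK), fun T hT δ hδ => ?_,
    fun T hT δ hδ => ?_⟩
  · obtain ⟨n, hTn, hδn, hwq⟩ := hfreq (δ / 2) (half_pos hδ) T (δ / 2) (half_pos hδ)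
    obtain ⟨z, hz, hzw⟩ := hwfrom n
    exact ⟨z, hz, (((hzw.of_le_scale hT hTn).mono hδn).add_dist q).mono (by linarith)⟩
  · obtain ⟨δ₁, hδ₁, hpert⟩ := ϕ.exists_pos_chainReach_of_dist_le T (half_pos hδ)
    obtain ⟨n, hTn, hδn, hwq⟩ := hfreq δ₁ hδ₁ T (δ / 2) (half_pos hδ)
    obtain ⟨z, hz, hwz⟩ := hwto n
    refine ⟨z, hz, (hpert ?_ ((hwz.of_le_scale hT hTn).mono hδn)).mono (by linarith)⟩
    rw [dist_comm]
    exact hwq.le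

theorem exists_pos_shell_crossing (hZ : IsInvariant ϕ Z) (hT : 0 < T) {η : ℝ} (hη : 0 < η)
    (hε : 0 < ε) :
    ∃ δ > 0, ∀ z ∈ Z, ∀ y, ϕ.ChainReach T δ z y → 2 * η < infDist y Z →
      ∃ w, infDist w Z ∈ Icc η (2 * η) ∧ (∃ z' ∈ Z, ϕ.ChainReach T ε z' w) ∧
        ϕ.ChainReach T ε w (ϕ T y) := by
  obtain ⟨δ₁, hδ₁, hm⟩ := ϕ.exists_pos_dist_flow_le (2 * T) hε
  refine ⟨min δ₁ (min η ε), by positivity, fun z hz y h hy =>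
    h.exists_shell_crossing hZ hT hη ((min_le_right _ _).trans (min_le_left _ _))
      ((min_le_right _ _).trans (min_le_right _ _)) (fun a b hab u hu => ?_) hz hy⟩
  exact hm a b (hab.trans (min_le_left _ _)) u ⟨by linarith [hu.1], hu.2⟩

end ChainSets

section ChainRecurrent

variable {X : Type} [MetricSpace X] {ϕ : Flow ℝ X} {x : X}

theorem mem_chainRecurrentSet_iff :
    x ∈ chainRecurrentSet (fun x t => ϕ t x) ↔ ∀ T > 0, ∀ δ > 0, ϕ.ChainReach T δ x x := by
  constructor
  · intro hx T hT δ hδ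
    obtain ⟨N, xs, ts, hN, h0, hNx, hstep⟩ := hx δ hδ (T + 1) (by linarith)
    refine Relation.TransGen.closed (fun _ _ h => h) _ _
      (Relation.transGen_iff_exists_seq (r := ϕ.ChainReach T δ) |>.2
        ⟨N, xs, hN, h0, hNx, fun i hi => ?_⟩)
    exact .of_le_time hT (by linarith [(hstep i hi).1]) (hstep i hi).2.le
  · intro h δ hδ T hT
    obtain ⟨N, xs, hN, h0, hNx, hstep⟩ :=
      Relation.transGen_iff_exists_seq.1 (h T (by linarith) (δ / 2) (half_pos hδ))
    have hts : ∀ i, ∃ t, i < N → T ≤ t ∧ dist (ϕ t (xs i)) (xs (i + 1)) < δ := fun i => by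
      by_cases hi : i < N
      · obtain ⟨t, ht, hd⟩ := hstep i hi
        exact ⟨t, fun _ => ⟨ht.1, by linarith⟩⟩
      · exact ⟨0, fun h => absurd h hi⟩
    choose ts hts using hts
    exact ⟨N, xs, ts, hN, h0, hNx, fun i hi => hts i hi⟩

theorem _root_.IsPreconnected.chainReach {Z : Set X} (hZ : IsPreconnected Z)
    (hZR : Z ⊆ chainRecurrentSet fun x t => ϕ t x) {T δ : ℝ} (hT : 0 < T) (hδ : 0 < δ) {z z' : X}
    (hz : z ∈ Z) (hz' : z' ∈ Z) : ϕ.ChainReach T δ z z' := by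
  have hnear : ∀ {a b}, a ∈ Z → dist a b < δ / 2 → ϕ.ChainReach T δ a b := fun ha hab =>
    ((mem_chainRecurrentSet_iff.1 (hZR ha) T hT (δ / 2) (half_pos hδ)).add_dist _).mono
      (by linarith)
  refine hZ.induction₂' (ϕ.ChainReach T δ) (fun a ha => ?_)
    (fun _ _ _ _ _ _ => ChainReach.trans) hz hz'
  filter_upwards [self_mem_nhdsWithin,
    mem_nhdsWithin_of_mem_nhds (ball_mem_nhds a (half_pos hδ))] with b hb hab
  exact ⟨hnear ha (by rwa [dist_comm]), hnear hb hab⟩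

theorem chainFrom_inter_chainTo_subset_chainRecurrentSet {Z : Set X} (hZ : IsPreconnected Z)
    (hZR : Z ⊆ chainRecurrentSet fun x t => ϕ t x) :
    ϕ.chainFrom Z ∩ ϕ.chainTo Z ⊆ chainRecurrentSet fun x t => ϕ t x := by
  rintro p ⟨hfrom, hto⟩
  refine mem_chainRecurrentSet_iff.2 fun T hT δ hδ => ?_
  obtain ⟨z, hz, hzp⟩ := hfrom T hT δ hδ
  obtain ⟨z', hz', hpz'⟩ := hto T hT δ hδ
  exact (hpz'.trans (hZ.chainReach hZR hT hδ hz' hz)).trans hzp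

variable [CompactSpace X]

variable (ϕ) in
theorem isClosed_chainRecurrentSet : IsClosed (chainRecurrentSet fun x t => ϕ t x) := by
  refine isClosed_of_closure_subset fun x hx => mem_chainRecurrentSet_iff.2 fun T hT δ hδ => ?_
  obtain ⟨δ₁, hδ₁, hpert⟩ := ϕ.exists_pos_chainReach_of_dist_le T (ε := δ / 3) (by positivity)
  obtain ⟨y, hy, hxy⟩ := Metric.mem_closure_iff.1 hx (min δ₁ (δ / 3)) (by positivity)
  have hyy := mem_chainRecurrentSet_iff.1 hy T hT (δ / 3) (by positivity)
  refine ((hpert (hxy.le.trans (min_le_left _ _)) hyy).add_dist x).mono ?_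
  rw [dist_comm]
  linarith [min_le_right δ₁ (δ / 3)]

variable (ϕ) in
theorem isInvariant_chainRecurrentSet : IsInvariant ϕ (chainRecurrentSet fun x t => ϕ t x) := by
  intro s x hx
  refine mem_chainRecurrentSet_iff.2 fun T hT δ hδ => ?_
  obtain ⟨δ₁, hδ₁, hflow⟩ := ϕ.exists_pos_chainReach_flow s hδ
  exact hflow (mem_chainRecurrentSet_iff.1 hx T hT δ₁ hδ₁)

theorem chainFrom_inter_chainTo_subset_of_isolated {Z U : Set X} (hZne : Z.Nonempty)
    (hZc : IsCompact Z) (hZconn : IsPreconnected Z) (hZinv : IsInvariant ϕ Z)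
    (hZR : Z ⊆ chainRecurrentSet fun x t => ϕ t x) (hU : IsOpen U) (hZU : Z ⊆ U)
    (hUR : U ∩ chainRecurrentSet (fun x t => ϕ t x) = Z) :
    ϕ.chainFrom Z ∩ ϕ.chainTo Z ⊆ Z := by
  obtain ⟨r, hr, hrU⟩ := hZc.exists_thickening_subset_open hU hZU
  have hnear : ∀ q ∈ ϕ.chainFrom Z ∩ ϕ.chainTo Z, infDist q Z < r → q ∈ Z := fun q hq hqr =>
    hUR ▸ ⟨hrU ((mem_thickening_iff_infDist_lt hZne).2 hqr),
      chainFrom_inter_chainTo_subset_chainRecurrentSet hZconn hZR hq⟩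
  intro p hp
  by_contra hpZ
  have hp_far : 2 * (r / 3) < infDist p Z :=
    lt_of_not_ge fun h => hpZ (hnear p hp (by linarith))
  have hshell : ∀ T > 0, ∀ δ > 0, ∃ w ∈ {w | infDist w Z ∈ Icc (r / 3) (2 * (r / 3))},
      (∃ z ∈ Z, ϕ.ChainReach T δ z w) ∧ ∃ z ∈ Z, ϕ.ChainReach T δ w z := by
    intro T hT δ hδ
    obtain ⟨δ', hδ', hcross⟩ := exists_pos_shell_crossing hZinv hT (η := r / 3) (by positivity) hδ
    obtain ⟨z, hz, hzp⟩ := hp.1 T hT δ' hδ'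
    obtain ⟨w, hw, hzw, hwp⟩ := hcross z hz p hzp hp_far
    obtain ⟨z', hz', hpz'⟩ := isInvariant_chainTo hZinv T hp.2 T hT δ hδ
    exact ⟨w, hw, hzw, z', hz', hwp.trans hpz'⟩
  obtain ⟨q, hq_shell, hq⟩ := exists_mem_chainFrom_inter_chainTo
    (isClosed_Icc.preimage (continuous_infDist_pt Z)) hshell
  have hqZ := hnear q hq (by linarith [hq_shell.2])
  have : r / 3 ≤ infDist q Z := hq_shell.1
  rw [infDist_zero_of_mem hqZ] at this
  linarith

end ChainRecurrent

section Cost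

variable {α : Type*} [PseudoMetricSpace α] (ϕ : Flow ℝ α)

noncomputable def chainCost (Z : Set α) (T : ℝ) (x : α) : ℝ :=
  sInf {c | ∃ z ∈ Z, ϕ.ChainReach T c z x}

/-- `chainCost` only decreases along flights of duration at least `T`; the supremum over a time
window of length `T` decreases along every forward flight. -/
noncomputable def windowCost (Z : Set α) (T : ℝ) (x : α) : ℝ :=
  sSup ((fun s => ϕ.chainCost Z T (ϕ s x)) '' Icc 0 T)

noncomputable def scaleCost (Z : Set α) (x : α) : ℝ :=
  ∑' k : ℕ, (1 / 2 : ℝ) ^ k * ϕ.windowCost Z (k + 1) x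

variable {ϕ} {Z : Set α} {T c δ r : ℝ} {x y z : α}

theorem chainCost_nonneg : 0 ≤ ϕ.chainCost Z T x :=
  Real.sInf_nonneg fun _ ⟨_, _, h⟩ => h.nonneg

theorem chainCost_le (hz : z ∈ Z) (h : ϕ.ChainReach T c z x) : ϕ.chainCost Z T x ≤ c :=
  csInf_le ⟨0, fun _ ⟨_, _, h⟩ => h.nonneg⟩ ⟨z, hz, h⟩

theorem chainReach_dist_flow (hT : 0 < T) (x y : α) :
    ϕ.ChainReach T (dist (ϕ T x) y) x y :=
  .single ⟨T, ⟨le_rfl, by linarith⟩, le_rfl⟩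

theorem exists_chainReach_of_chainCost_lt (hZ : Z.Nonempty) (hT : 0 < T)
    (h : ϕ.chainCost Z T x < δ) : ∃ z ∈ Z, ϕ.ChainReach T δ z x := by
  obtain ⟨z, hz⟩ := hZ
  have hne : {c | ∃ z ∈ Z, ϕ.ChainReach T c z x}.Nonempty :=
    ⟨_, z, hz, chainReach_dist_flow hT z x⟩
  obtain ⟨_, ⟨z, hz, hc⟩, hcδ⟩ := exists_lt_of_csInf_lt hne h
  exact ⟨z, hz, hc.mono hcδ.le⟩

theorem chainCost_le_add_dist (hZ : Z.Nonempty) (hT : 0 < T) (x y : α) :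
    ϕ.chainCost Z T y ≤ ϕ.chainCost Z T x + dist x y := by
  obtain ⟨z, hz⟩ := hZ
  rw [← sub_le_iff_le_add]
  exact le_csInf ⟨_, z, hz, chainReach_dist_flow hT z x⟩ fun c ⟨z, hz, h⟩ =>
    sub_le_iff_le_add.2 (chainCost_le hz (h.add_dist y))

theorem continuous_chainCost (hZ : Z.Nonempty) (hT : 0 < T) : Continuous (ϕ.chainCost Z T) :=
  (LipschitzWith.of_le_add fun x y => by
    rw [dist_comm]
    exact chainCost_le_add_dist hZ hT y x).continuous

theorem chainCost_flow_le (hZ : Z.Nonempty) (hT : 0 < T) {s : ℝ} (hs : T ≤ s) :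
    ϕ.chainCost Z T (ϕ s x) ≤ ϕ.chainCost Z T x :=
  let ⟨z, hz⟩ := hZ
  le_csInf ⟨_, z, hz, chainReach_dist_flow hT z x⟩ fun _ ⟨z, hz, h⟩ =>
    chainCost_le hz (h.trans (.of_le_time hT hs (by rw [dist_self]; exact h.nonneg)))

theorem chainCost_eq_zero (hZinv : IsInvariant ϕ Z) (hT : 0 < T) (hz : z ∈ Z) :
    ϕ.chainCost Z T z = 0 := by
  refine le_antisymm ((chainCost_le (hZinv (-T) hz) (chainReach_dist_flow hT _ z)).trans ?_)
    chainCost_nonneg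
  rw [← map_add, add_neg_cancel, map_zero_apply, dist_self]

theorem windowCost_le (hT : 0 ≤ T) {b : ℝ} (h : ∀ s ∈ Icc 0 T, ϕ.chainCost Z T (ϕ s x) ≤ b) :
    ϕ.windowCost Z T x ≤ b :=
  csSup_le ((nonempty_Icc.2 hT).image _) (forall_mem_image.2 h)

theorem continuous_windowCost (hZ : Z.Nonempty) (hT : 0 < T) : Continuous (ϕ.windowCost Z T) :=
  isCompact_Icc.continuous_sSup (f := fun x s => ϕ.chainCost Z T (ϕ s x))
    ((continuous_chainCost hZ hT).comp (ϕ.continuous continuous_snd continuous_fst))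

variable [CompactSpace α]

theorem chainCost_le_diam (hZ : Z.Nonempty) (hT : 0 < T) :
    ϕ.chainCost Z T x ≤ diam (univ : Set α) :=
  let ⟨_, hz⟩ := hZ
  (chainCost_le hz (chainReach_dist_flow hT _ x)).trans
    (dist_le_diam_of_mem isCompact_univ.isBounded (mem_univ _) (mem_univ _))

theorem chainCost_le_windowCost (hZ : Z.Nonempty) (hT : 0 < T) {s : ℝ} (hs : s ∈ Icc 0 T) :
    ϕ.chainCost Z T (ϕ s x) ≤ ϕ.windowCost Z T x :=
  le_csSup ⟨_, forall_mem_image.2 fun _ _ => chainCost_le_diam hZ hT⟩ (mem_image_of_mem _ hs)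

theorem windowCost_nonneg (hZ : Z.Nonempty) (hT : 0 < T) : 0 ≤ ϕ.windowCost Z T x :=
  chainCost_nonneg.trans (chainCost_le_windowCost hZ hT ⟨le_rfl, hT.le⟩)

theorem windowCost_le_diam (hZ : Z.Nonempty) (hT : 0 < T) :
    ϕ.windowCost Z T x ≤ diam (univ : Set α) :=
  windowCost_le hT.le fun _ _ => chainCost_le_diam hZ hT

theorem windowCost_flow_le (hZ : Z.Nonempty) (hT : 0 < T) (hr : 0 ≤ r) :
    ϕ.windowCost Z T (ϕ r x) ≤ ϕ.windowCost Z T x := by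
  refine windowCost_le hT.le fun s hs => ?_
  rw [← map_add]
  rcases le_or_gt (s + r) T with h | h
  · exact chainCost_le_windowCost hZ hT ⟨by linarith [hs.1], h⟩
  set q := min T (s + r - T)
  have hq : T ≤ s + r - q := by linarith [min_le_right T (s + r - T)]
  calc ϕ.chainCost Z T (ϕ (s + r) x) = ϕ.chainCost Z T (ϕ (s + r - q) (ϕ q x)) := by
        rw [← map_add, sub_add_cancel]
    _ ≤ ϕ.chainCost Z T (ϕ q x) := chainCost_flow_le hZ hT hq
    _ ≤ ϕ.windowCost Z T x :=
      chainCost_le_windowCost hZ hT ⟨le_min hT.le (by linarith), min_le_left _ _⟩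

theorem windowCost_eq_zero (hZinv : IsInvariant ϕ Z) (hT : 0 < T) (hz : z ∈ Z) :
    ϕ.windowCost Z T z = 0 :=
  le_antisymm (windowCost_le hT.le fun s _ => (chainCost_eq_zero hZinv hT (hZinv s hz)).le)
    (windowCost_nonneg ⟨z, hz⟩ hT)

theorem continuous_scaleCost (hZ : Z.Nonempty) : Continuous (ϕ.scaleCost Z) :=
  continuous_tsum_half_pow_mul (fun k => continuous_windowCost hZ k.cast_add_one_pos)
    (fun k _ => windowCost_nonneg hZ k.cast_add_one_pos)
    (fun k _ => windowCost_le_diam hZ k.cast_add_one_pos)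

theorem scaleCost_nonneg (hZ : Z.Nonempty) : 0 ≤ ϕ.scaleCost Z x :=
  tsum_nonneg fun k => mul_nonneg (by positivity) (windowCost_nonneg hZ k.cast_add_one_pos)

theorem scaleCost_flow_le (hZ : Z.Nonempty) (hr : 0 ≤ r) :
    ϕ.scaleCost Z (ϕ r x) ≤ ϕ.scaleCost Z x :=
  tsum_half_pow_mul_le_tsum (fun k => windowCost_nonneg hZ k.cast_add_one_pos)
    (fun k => windowCost_flow_le hZ k.cast_add_one_pos hr)
    (fun k => windowCost_le_diam hZ k.cast_add_one_pos)

theorem scaleCost_eq_zero (hZinv : IsInvariant ϕ Z) (hz : z ∈ Z) : ϕ.scaleCost Z z = 0 := by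
  simp [scaleCost, windowCost_eq_zero hZinv (Nat.cast_add_one_pos _) hz]

theorem mem_chainFrom_of_scaleCost_eq_zero (hZ : Z.Nonempty) (h : ϕ.scaleCost Z x = 0) :
    x ∈ ϕ.chainFrom Z := by
  intro T hT δ hδ
  have hw := (tsum_half_pow_mul_eq_zero_iff (fun k => windowCost_nonneg hZ k.cast_add_one_pos)
    (fun k => windowCost_le_diam hZ k.cast_add_one_pos)).1 h
  obtain ⟨k, hk⟩ := exists_nat_ge T
  have hck : ϕ.chainCost Z (k + 1) x < δ := by
    have := chainCost_le_windowCost (ϕ := ϕ) (x := x) hZ k.cast_add_one_pos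
      ⟨le_rfl, k.cast_add_one_pos.le⟩
    rw [map_zero_apply, hw k] at this
    linarith
  obtain ⟨z, hz, hzx⟩ := exists_chainReach_of_chainCost_lt hZ k.cast_add_one_pos hck
  exact ⟨z, hz, hzx.of_le_scale hT (by linarith)⟩

end Cost

section Lyapunov

variable {α : Type*} [TopologicalSpace α] (ϕ : Flow ℝ α)

structure IsRigidLyapunov (G : α → ℝ) : Prop where
  continuous : Continuous G
  flow_le : ∀ x, ∀ r ≥ 0, G (ϕ r x) ≤ G x
  eq_of_flow_eq : ∀ x, ∀ s > 0, G (ϕ s x) = G x → ∀ r ≥ 0, G (ϕ r x) = G x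

noncomputable def orbitSum (g : α → ℝ) (x : α) : ℝ :=
  ∑' n : ℕ, (1 / 2 : ℝ) ^ n * ∫ t in (n : ℝ)..n + 1, g (ϕ t x)

variable {ϕ} {g : α → ℝ} {x : α}

theorem antitone_flow_of_flow_le (h : ∀ x, ∀ r ≥ 0, g (ϕ r x) ≤ g x) (x : α) :
    Antitone fun t => g (ϕ t x) := fun t₁ t₂ h₁₂ => by
  have := h (ϕ t₁ x) (t₂ - t₁) (sub_nonneg.2 h₁₂)
  rwa [← map_add, sub_add_cancel] at this

theorem orbitSum_eq_zero (h : ∀ t, g (ϕ t x) = 0) : ϕ.orbitSum g x = 0 := by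
  simp [orbitSum, h]

variable [CompactSpace α] (hg : Continuous g) (hg0 : 0 ≤ g)
include hg hg0

theorem exists_forall_integral_flow_mem_Icc :
    ∃ C, ∀ x (n : ℕ), ∫ t in (n : ℝ)..n + 1, g (ϕ t x) ∈ Icc 0 C := by
  obtain ⟨C, hC⟩ := (isCompact_range hg).bddAbove
  refine ⟨C, fun x n => ⟨intervalIntegral.integral_nonneg (by linarith) fun t _ => hg0 _, ?_⟩⟩
  have := intervalIntegral.integral_mono_on (by linarith : (n : ℝ) ≤ n + 1)
    ((hg.comp (ϕ.continuous continuous_id continuous_const)).intervalIntegrable _ _)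
    (intervalIntegrable_const (μ := MeasureTheory.volume)) fun t _ => hC ⟨ϕ t x, rfl⟩
  simpa using this

theorem continuous_orbitSum : Continuous (ϕ.orbitSum g) :=
  let ⟨_, hC⟩ := exists_forall_integral_flow_mem_Icc (ϕ := ϕ) hg hg0
  continuous_tsum_half_pow_mul
    (fun _ => intervalIntegral.continuous_parametric_intervalIntegral_of_continuous'
      (f := fun x t => g (ϕ t x)) (hg.comp (ϕ.continuous continuous_snd continuous_fst)) _ _)
    (fun n x => (hC x n).1) (fun n x => (hC x n).2)

theorem orbitSum_nonneg : 0 ≤ ϕ.orbitSum g x :=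
  let ⟨_, hC⟩ := exists_forall_integral_flow_mem_Icc (ϕ := ϕ) hg hg0
  tsum_nonneg fun n => mul_nonneg (by positivity) (hC x n).1

theorem orbitSum_le_orbitSum {y : α} (hxy : ∀ t ≥ 0, g (ϕ t x) ≤ g (ϕ t y)) :
    ϕ.orbitSum g x ≤ ϕ.orbitSum g y := by
  obtain ⟨_, hC⟩ := exists_forall_integral_flow_mem_Icc (ϕ := ϕ) hg hg0
  refine tsum_half_pow_mul_le_tsum (fun n => (hC x n).1) (fun n => ?_) (fun n => (hC y n).2)
  exact intervalIntegral.integral_mono_on (by linarith)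
    ((hg.comp (ϕ.continuous continuous_id continuous_const)).intervalIntegrable _ _)
    ((hg.comp (ϕ.continuous continuous_id continuous_const)).intervalIntegrable _ _)
    fun t ht => hxy t ((Nat.cast_nonneg n).trans ht.1)

theorem orbitSum_lt_orbitSum {y : α} (hxy : ∀ t ≥ 0, g (ϕ t x) ≤ g (ϕ t y)) {t : ℝ} (ht : 0 ≤ t)
    (hlt : g (ϕ t x) < g (ϕ t y)) : ϕ.orbitSum g x < ϕ.orbitSum g y := by
  obtain ⟨_, hC⟩ := exists_forall_integral_flow_mem_Icc (ϕ := ϕ) hg hg0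
  have hcont : ∀ y, Continuous fun t => g (ϕ t y) := fun y =>
    hg.comp (ϕ.continuous continuous_id continuous_const)
  refine tsum_half_pow_mul_lt_tsum (i := ⌊t⌋₊) (fun n => (hC x n).1) (fun n => ?_)
    (fun n => (hC y n).2) ?_
  · exact intervalIntegral.integral_mono_on (by linarith) ((hcont x).intervalIntegrable _ _)
      ((hcont y).intervalIntegrable _ _) fun u hu => hxy u ((Nat.cast_nonneg n).trans hu.1)
  · exact intervalIntegral.integral_lt_integral_of_continuousOn_of_le_of_exists_lt (by linarith)
      (hcont x).continuousOn (hcont y).continuousOn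
      (fun u hu => hxy u ((Nat.cast_nonneg _).trans hu.1.le))
      ⟨t, ⟨Nat.floor_le ht, (Nat.lt_floor_add_one t).le⟩, hlt⟩

theorem apply_eq_zero_of_orbitSum_eq_zero (h : ϕ.orbitSum g x = 0) : g x = 0 := by
  obtain ⟨_, hC⟩ := exists_forall_integral_flow_mem_Icc (ϕ := ϕ) hg hg0
  have h0 := (tsum_half_pow_mul_eq_zero_iff (fun n => (hC x n).1) (fun n => (hC x n).2)).1 h 0
  refine le_antisymm (not_lt.1 fun hpos => ?_) (hg0 x)
  have := intervalIntegral.integral_pos (f := fun t => g (ϕ t x)) zero_lt_one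
    (hg.comp (ϕ.continuous continuous_id continuous_const)).continuousOn (fun _ _ => hg0 _)
    ⟨0, ⟨le_rfl, zero_le_one⟩, by rwa [map_zero_apply]⟩
  simp only [Nat.cast_zero, zero_add] at h0
  exact this.ne' h0

variable (hanti : ∀ x, ∀ r ≥ 0, g (ϕ r x) ≤ g x)
include hanti

theorem orbitSum_flow_le {r : ℝ} (hr : 0 ≤ r) : ϕ.orbitSum g (ϕ r x) ≤ ϕ.orbitSum g x :=
  orbitSum_le_orbitSum hg hg0 fun t _ => by
    rw [← map_add, add_comm, map_add]
    exact hanti _ r hr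

theorem flow_add_eq_of_orbitSum_flow_eq {s : ℝ} (hs : 0 ≤ s)
    (h : ϕ.orbitSum g (ϕ s x) = ϕ.orbitSum g x) {t : ℝ} (ht : 0 ≤ t) :
    g (ϕ (t + s) x) = g (ϕ t x) := by
  have hle : ∀ u ≥ 0, g (ϕ u (ϕ s x)) ≤ g (ϕ u x) := fun u _ => by
    rw [← map_add, add_comm, map_add]
    exact hanti _ s hs
  rw [map_add]
  exact (hle t ht).antisymm <| not_lt.1 fun hlt =>
    h.not_lt (orbitSum_lt_orbitSum hg hg0 hle ht hlt)

theorem isRigidLyapunov_orbitSum : ϕ.IsRigidLyapunov (ϕ.orbitSum g) where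
  continuous := continuous_orbitSum hg hg0
  flow_le _ _ hr := orbitSum_flow_le hg hg0 hanti hr
  eq_of_flow_eq x s hs h r hr := by
    have hconst : ∀ t ≥ 0, g (ϕ t x) = g x := fun t ht => by
      have := ((antitone_flow_of_flow_le hanti x).antitoneOn (Ici 0)).eq_of_add_period hs
        (fun t ht => flow_add_eq_of_orbitSum_flow_eq hg hg0 hanti hs.le h ht) ht
      rwa [map_zero_apply] at this
    have heq : ∀ t ≥ 0, g (ϕ t (ϕ r x)) = g (ϕ t x) := fun t ht => by
      rw [← map_add, hconst _ (by positivity), hconst t ht]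
    exact le_antisymm (orbitSum_le_orbitSum hg hg0 fun t ht => (heq t ht).le)
      (orbitSum_le_orbitSum hg hg0 fun t ht => (heq t ht).ge)

end Lyapunov

section ChainLyapunov

variable {α : Type*} [PseudoMetricSpace α] (ϕ : Flow ℝ α)

noncomputable def chainLyapunov (Z : Set α) : α → ℝ :=
  ϕ.orbitSum (ϕ.scaleCost Z)

variable {ϕ} [CompactSpace α] {Z : Set α}

theorem isRigidLyapunov_chainLyapunov (hZ : Z.Nonempty) : ϕ.IsRigidLyapunov (ϕ.chainLyapunov Z) :=
  isRigidLyapunov_orbitSum (continuous_scaleCost hZ) (fun _ => scaleCost_nonneg hZ)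
    fun _ _ hr => scaleCost_flow_le hZ hr

theorem chainLyapunov_nonneg (hZ : Z.Nonempty) (x : α) : 0 ≤ ϕ.chainLyapunov Z x :=
  orbitSum_nonneg (continuous_scaleCost hZ) (fun _ => scaleCost_nonneg hZ)

theorem chainLyapunov_eq_zero (hZinv : IsInvariant ϕ Z) {z : α} (hz : z ∈ Z) :
    ϕ.chainLyapunov Z z = 0 :=
  orbitSum_eq_zero fun t => scaleCost_eq_zero hZinv (hZinv t hz)

theorem mem_chainFrom_of_chainLyapunov_eq_zero (hZ : Z.Nonempty) {x : α}
    (h : ϕ.chainLyapunov Z x = 0) : x ∈ ϕ.chainFrom Z :=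
  mem_chainFrom_of_scaleCost_eq_zero hZ <|
    apply_eq_zero_of_orbitSum_eq_zero (continuous_scaleCost hZ) (fun _ => scaleCost_nonneg hZ) h

end ChainLyapunov

section FlowConvex

variable {α : Type*} [TopologicalSpace α] (ϕ : Flow ℝ α)

def IsFlowConvex (B : Set α) : Prop :=
  (∀ x, OrdConnected {t | ϕ t x ∈ B}) ∧
    ContinuousOn (fun x => sInf {t | ϕ t x ∈ B})
      {x | {t | ϕ t x ∈ B}.Nonempty ∧ BddBelow {t | ϕ t x ∈ B}}

variable {ϕ} {G H : α → ℝ} {ε : ℝ}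

namespace IsRigidLyapunov

variable (hG : ϕ.IsRigidLyapunov G)
include hG

theorem lt_apply_of_lt_sInf {x : α} (hne : {t | G (ϕ t x) < ε}.Nonempty)
    (hbdd : BddBelow {t | G (ϕ t x) < ε}) {t : ℝ} (ht : t < sInf {t | G (ϕ t x) < ε}) :
    ε < G (ϕ t x) := by
  set τ := sInf {t | G (ϕ t x) < ε}
  have hanti := antitone_flow_of_flow_le hG.flow_le x
  have hbefore : ∀ s < τ, ε ≤ G (ϕ s x) := fun s hs =>
    not_lt.1 fun h => hs.not_ge (csInf_le hbdd h)
  have hτ : ε ≤ G (ϕ τ x) :=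
    ge_of_tendsto (((hG.continuous.comp (ϕ.continuous continuous_id continuous_const)).tendsto τ
      ).mono_left nhdsWithin_le_nhds) (eventually_nhdsWithin_of_forall (s := Iio τ) hbefore)
  refine (hbefore t ht).lt_of_ne fun hεt => ?_
  obtain ⟨u, hu⟩ := hne
  have htu : t ≤ u := ht.le.trans (csInf_le hbdd hu)
  have hconst := hG.eq_of_flow_eq (ϕ t x) (τ - t) (sub_pos.2 ht) ?_ (u - t) (sub_nonneg.2 htu)
  · rw [← map_add, sub_add_cancel, ← hεt] at hconst
    exact hu.ne hconst
  · rw [← map_add, sub_add_cancel]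
    exact (hanti ht.le).antisymm (hεt.symm.trans_le hτ)

theorem continuousOn_sInf :
    ContinuousOn (fun x => sInf {t | G (ϕ t x) < ε})
      {x | {t | G (ϕ t x) < ε}.Nonempty ∧ BddBelow {t | G (ϕ t x) < ε}} := by
  intro x hx
  have hanti := antitone_flow_of_flow_le hG.flow_le
  have hcont : ∀ s, Continuous fun y => G (ϕ s y) := fun s =>
    hG.continuous.comp (ϕ.continuous_toFun s)
  refine tendsto_order.2 ⟨fun a ha => ?_, fun b hb => ?_⟩
  · obtain ⟨s, has, hsτ⟩ := exists_between ha
    have hev := ((hcont s).tendsto x).eventually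
      (eventually_gt_nhds (hG.lt_apply_of_lt_sInf hx.1 hx.2 hsτ))
    filter_upwards [nhdsWithin_le_nhds hev, self_mem_nhdsWithin] with y hy hyA
    exact has.trans_le (le_csInf hyA.1 fun u hu =>
      le_of_not_gt fun hus => lt_asymm (hy.trans_le (hanti y hus.le)) hu)
  · obtain ⟨s, hτs, hsb⟩ := exists_between hb
    obtain ⟨u, hu, hus⟩ := exists_lt_of_csInf_lt hx.1 hτs
    have hev := ((hcont s).tendsto x).eventually (eventually_lt_nhds ((hanti x hus.le).trans_lt hu))
    filter_upwards [nhdsWithin_le_nhds hev, self_mem_nhdsWithin] with y hy hyA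
    exact (csInf_le hyA.2 hy).trans_lt hsb

theorem isFlowConvex (hH : ∀ x, Monotone fun t => H (ϕ t x)) (ε : ℝ) :
    ϕ.IsFlowConvex {x | G x < ε ∧ H x < ε} := by
  have hanti := antitone_flow_of_flow_le hG.flow_le
  refine ⟨fun x => ⟨fun t₁ h₁ t₂ h₂ t ht =>
    ⟨(hanti x ht.1).trans_lt h₁.1, (hH x ht.2).trans_lt h₂.2⟩⟩, ?_⟩
  have key : ∀ x ∈ {x | {t | G (ϕ t x) < ε ∧ H (ϕ t x) < ε}.Nonempty ∧
      BddBelow {t | G (ϕ t x) < ε ∧ H (ϕ t x) < ε}},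
      ({t | G (ϕ t x) < ε}.Nonempty ∧ BddBelow {t | G (ϕ t x) < ε}) ∧
        sInf {t | G (ϕ t x) < ε ∧ H (ϕ t x) < ε} = sInf {t | G (ϕ t x) < ε} := fun x hx => by
    have hV : IsLowerSet {t | H (ϕ t x) < ε} := fun a b hba ha => (hH x hba).trans_lt ha
    obtain ⟨hbdd, heq⟩ := hV.bddBelow_and_csInf_inter_eq (U := {t | G (ϕ t x) < ε}) hx.1 hx.2
    exact ⟨⟨hx.1.mono inter_subset_left, hbdd⟩, heq⟩
  exact (hG.continuousOn_sInf.mono fun x hx => (key x hx).1).congr fun x hx => (key x hx).2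

end IsRigidLyapunov

theorem exists_isFlowConvex_of_isRigidLyapunov [CompactSpace α] {Z : Set α}
    (hG : ϕ.IsRigidLyapunov G)
    (hH : ϕ.reverse.IsRigidLyapunov H) (hZ : ∀ z ∈ Z, G z ≤ 0 ∧ H z ≤ 0)
    (hZ' : ∀ x, G x ≤ 0 → H x ≤ 0 → x ∈ Z) :
    ∀ W ∈ 𝓝ˢ Z, ∃ B, IsOpen B ∧ Z ⊆ B ∧ B ⊆ W ∧ ϕ.IsFlowConvex B := by
  intro W hW
  obtain ⟨ε, hε, hεW⟩ := exists_pos_setOf_lt_subset (hG.continuous.max hH.continuous)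
    isOpen_interior fun x hx => subset_interior_iff_mem_nhdsSet.2 hW
      (hZ' x (le_of_max_le_left hx) (le_of_max_le_right hx))
  have hH_mono : ∀ x, Monotone fun t => H (ϕ t x) := fun x t₁ t₂ h => by
    simpa using antitone_flow_of_flow_le hH.flow_le x (neg_le_neg h)
  exact ⟨{x | G x < ε ∧ H x < ε},
    (isOpen_lt hG.continuous continuous_const).inter (isOpen_lt hH.continuous continuous_const),
    fun z hz => ⟨(hZ z hz).1.trans_lt hε, (hZ z hz).2.trans_lt hε⟩,
    fun x hx => interior_subset (hεW (max_lt hx.1 hx.2)), hG.isFlowConvex hH_mono ε⟩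

end FlowConvex

theorem exists_isFlowConvex_of_isolated {X : Type} [MetricSpace X] [CompactSpace X]
    (ϕ : Flow ℝ X) {Z : Set X}
    (hZ : ∃ x ∈ chainRecurrentSet (fun x t => ϕ t x),
      Z = connectedComponentIn (chainRecurrentSet fun x t => ϕ t x) x)
    (hiso : ∃ U₀ : Set X, IsOpen U₀ ∧ Z ⊆ U₀ ∧ U₀ ∩ chainRecurrentSet (fun x t => ϕ t x) = Z) :
    ∀ W ∈ 𝓝ˢ Z, ∃ B, IsOpen B ∧ Z ⊆ B ∧ B ⊆ W ∧ ϕ.IsFlowConvex B := by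
  obtain ⟨x₀, hx₀, rfl⟩ := hZ
  obtain ⟨U₀, hU₀, hZU₀, hU₀R⟩ := hiso
  have hZne : (connectedComponentIn _ x₀).Nonempty := ⟨x₀, mem_connectedComponentIn hx₀⟩
  have hZinv := (isInvariant_chainRecurrentSet ϕ).connectedComponentIn x₀
  have hZinv' : IsInvariant ϕ.reverse (connectedComponentIn _ x₀) := fun t => hZinv (-t)
  refine exists_isFlowConvex_of_isRigidLyapunov (isRigidLyapunov_chainLyapunov hZne)
    (isRigidLyapunov_chainLyapunov hZne)
    (fun z hz => ⟨(chainLyapunov_eq_zero hZinv hz).le, (chainLyapunov_eq_zero hZinv' hz).le⟩)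
    fun x hG hH => chainFrom_inter_chainTo_subset_of_isolated hZne
      ((isClosed_chainRecurrentSet ϕ).connectedComponentIn x₀).isCompact
      isPreconnected_connectedComponentIn hZinv (connectedComponentIn_subset _ _) hU₀ hZU₀ hU₀R
      ⟨mem_chainFrom_of_chainLyapunov_eq_zero hZne (hG.antisymm (chainLyapunov_nonneg hZne x)),
        chainFrom_reverse_subset_chainTo <|
          mem_chainFrom_of_chainLyapunov_eq_zero hZne (hH.antisymm (chainLyapunov_nonneg hZne x))⟩

end Flow

theorem exists_flow_convex_neighborhood_general
    (n : ℕ) (M : Type) [MetricSpace M]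
    [ChartedSpace (EuclideanSpace ℝ (Fin n)) M]
    [IsManifold (𝓡 n) (⊤ : ℕ∞) M]
    [CompactSpace M]
    (v : (x : M) → TangentSpace (𝓡 n) x)
    (Φ : M → ℝ → M) (hΦ : IsFlowOf v Φ)
    (Z : Set M)
    (hZ : ∃ x ∈ chainRecurrentSet Φ, Z = connectedComponentIn (chainRecurrentSet Φ) x)
    (hiso : ∃ U₀ : Set M, IsOpen U₀ ∧ Z ⊆ U₀ ∧ U₀ ∩ chainRecurrentSet Φ = Z) :
    ∀ W ∈ nhdsSet Z, ∃ B : Set M, IsOpen B ∧ Z ⊆ B ∧ B ⊆ W ∧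
      (∀ x : M, Set.OrdConnected {t : ℝ | Φ x t ∈ B}) ∧
      ContinuousOn (fun x : M => sInf {t : ℝ | Φ x t ∈ B})
        {x : M | ({t : ℝ | Φ x t ∈ B}).Nonempty ∧ BddBelow {t : ℝ | Φ x t ∈ B}} := by
  let ϕ : Flow ℝ M := ⟨fun t x => Φ x t, hΦ.1.comp continuous_swap,
    fun _ _ _ => by rw [add_comm, hΦ.2.2.1], hΦ.2.1⟩
  exact ϕ.exists_isFlowConvex_of_isolated hZ hiso

/-- **Existence of flow-convex neighbourhoods (Farber–Kappeler).**  Let `v` be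
a smooth vector field on a closed smooth manifold `M` generating a flow `Φ`
(write `x·t = Φ x t`), and let `Z` be a connected component of the chain
recurrent set `R` of `Φ` which is isolated in `R`.  Then every neighbourhood
`W` of `Z` contains an open neighbourhood `B` of `Z` such that:
(A) for every `x ∈ M` the set `J_x = {t | x·t ∈ B}` is convex (empty or an
interval); and (B) on the set `A` of points `x` for which `J_x` is nonempty
and bounded below, the function `x ↦ inf J_x` is continuous. -/
theorem exists_flow_convex_neighborhood
    (n : ℕ) (M : Type) [MetricSpace M]
    [ChartedSpace (EuclideanSpace ℝ (Fin n)) M]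
    [IsManifold (𝓡 n) (⊤ : ℕ∞) M]
    [CompactSpace M]
    (v : (x : M) → TangentSpace (𝓡 n) x) (hv : IsSmoothVF v)
    (Φ : M → ℝ → M) (hΦ : IsFlowOf v Φ)
    (Z : Set M)
    (hZ : ∃ x ∈ chainRecurrentSet Φ, Z = connectedComponentIn (chainRecurrentSet Φ) x)
    (hiso : ∃ U₀ : Set M, IsOpen U₀ ∧ Z ⊆ U₀ ∧ U₀ ∩ chainRecurrentSet Φ = Z) :
    ∀ W ∈ nhdsSet Z, ∃ B : Set M, IsOpen B ∧ Z ⊆ B ∧ B ⊆ W ∧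
      (∀ x : M, Set.OrdConnected {t : ℝ | Φ x t ∈ B}) ∧
      ContinuousOn (fun x : M => sInf {t : ℝ | Φ x t ∈ B})
        {x : M | ({t : ℝ | Φ x t ∈ B}).Nonempty ∧ BddBelow {t : ℝ | Φ x t ∈ B}} :=
  exists_flow_convex_neighborhood_general n M v Φ hΦ Z hZ hiso
end
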